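/- arXiv:1711.02458 — 2 statements merged into one kernel-verified Lean document; each statement's English description precedes it below -/
import Mathlib

section
/- Let N ≥ 1 and let B be an N×N bi-stochastic matrix each of whose rows has pairwise distinct entries. Then ∫ [H(Bλ) − H(λ)] dμ_N(λ) = Q(Bᵀ), where the integral is over the probability simplex Δ_{N−1} with respect to the uniform probability measure μ_N, and Q(Bᵀ) = (1/N) Σ_{i=1}^N Q(b_i) with b_1, …, b_N the rows of B. -/
open MeasureTheory Real

/-- Shannon entropy of a vector, with the convention `0 * log 0 = 0`. -/
noncomputable def shannonEntropy {N : ℕ} (p : Fin N → ℝ) : ℝ :=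
  ∑ i, Real.negMulLog (p i)

/-- Subentropy of a vector (well defined when the entries are pairwise distinct). -/
noncomputable def subentropy {N : ℕ} (p : Fin N → ℝ) : ℝ :=
  -∑ i, p i ^ N * Real.log (p i) / ∏ j ∈ Finset.univ.erase i, (p i - p j)

/-- A matrix is bi-stochastic if it has nonnegative entries and all row and column sums are 1. -/
def IsBistochastic {N : ℕ} (B : Matrix (Fin N) (Fin N) ℝ) : Prop :=
  (∀ i j, 0 ≤ B i j) ∧ (∀ i, ∑ j, B i j = 1) ∧ (∀ j, ∑ i, B i j = 1)

/-- Parametrization of the probability simplex `Δ_{N-1}` by the solid simplex in `ℝ^{N-1}`: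
`x ↦ (x_1, …, x_{N-1}, 1 - ∑_{j<N} x_j)`. -/
noncomputable def simplexMap (N : ℕ) (x : Fin (N - 1) → ℝ) : Fin N → ℝ :=
  fun i => if h : (i : ℕ) < N - 1 then x ⟨i, h⟩ else 1 - ∑ j, x j

/-- The solid simplex `T = {x ∈ ℝ^{N-1} : x_j ≥ 0, ∑_j x_j ≤ 1}`. -/
def solidSimplex (N : ℕ) : Set (Fin (N - 1) → ℝ) :=
  {x | (∀ j, 0 ≤ x j) ∧ ∑ j, x j ≤ 1}

/-- Integral of a function on the probability simplex with respect to the uniform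
probability measure `μ_N`, realized as `(N-1)!` times the Lebesgue integral over the
solid simplex of the parametrized integrand. -/
noncomputable def simplexIntegral (N : ℕ) (f : (Fin N → ℝ) → ℝ) : ℝ :=
  ((N - 1).factorial : ℝ) * ∫ x in solidSimplex N, f (simplexMap N x)

/-- The `N`-th harmonic number `H_N = ∑_{j=1}^N 1/j`. -/
noncomputable def harmonicNum (N : ℕ) : ℝ := ∑ j ∈ Finset.range N, (1 : ℝ) / (j + 1)

def TT (n : ℕ) : Set (Fin n → ℝ) := {x | (∀ j, 0 ≤ x j) ∧ ∑ j, x j ≤ 1}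


lemma measurableSet_TT (n : ℕ) : MeasurableSet (TT n) := by
  have h1 : MeasurableSet {x : Fin n → ℝ | ∀ j, 0 ≤ x j} := by
    rw [Set.setOf_forall]
    exact MeasurableSet.iInter fun j => measurableSet_le measurable_const (measurable_pi_apply j)
  have h2 : MeasurableSet {x : Fin n → ℝ | ∑ j, x j ≤ 1} :=
    measurableSet_le (by fun_prop) measurable_const
  exact h1.inter h2

lemma isCompact_TT (n : ℕ) : IsCompact (TT n) := by
  have hclosed : IsClosed (TT n) := by
    have h1 : IsClosed {x : Fin n → ℝ | ∀ j, 0 ≤ x j} := by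
      rw [Set.setOf_forall]
      exact isClosed_iInter fun j => isClosed_le continuous_const (continuous_apply j)
    have h2 : IsClosed {x : Fin n → ℝ | ∑ j, x j ≤ 1} :=
      isClosed_le (by fun_prop) continuous_const
    exact h1.inter h2
  refine IsCompact.of_isClosed_subset (isCompact_Icc (a := (0 : Fin n → ℝ)) (b := 1)) hclosed ?_
  rintro x ⟨hx0, hx1⟩
  refine ⟨fun j => hx0 j, fun j => ?_⟩
  calc x j ≤ ∑ i, x i := Finset.single_le_sum (fun i _ => hx0 i) (Finset.mem_univ j)
  _ ≤ 1 := hx1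

lemma integrableOn_TT {n : ℕ} {f : (Fin n → ℝ) → ℝ} (hf : Continuous f) :
    IntegrableOn f (TT n) := hf.continuousOn.integrableOn_compact (isCompact_TT n)

lemma snoc_mem_TT_iff {n : ℕ} (y : Fin n → ℝ) (z : ℝ) :
    Fin.snoc y z ∈ TT (n+1) ↔ y ∈ TT n ∧ z ∈ Set.Icc 0 (1 - ∑ j, y j) := by
  have hsum : ∑ i, (Fin.snoc y z : Fin (n+1) → ℝ) i = ∑ j, y j + z := by
    rw [Fin.sum_univ_castSucc]
    simp
  constructor
  · rintro ⟨h0, h1⟩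
    have hz : 0 ≤ z := by simpa using h0 (Fin.last n)
    have hy : ∀ j, 0 ≤ y j := fun j => by simpa using h0 j.castSucc
    rw [hsum] at h1
    exact ⟨⟨hy, by linarith⟩, hz, by linarith⟩
  · rintro ⟨⟨hy, _⟩, hz0, hz1⟩
    refine ⟨fun i => ?_, by rw [hsum]; linarith⟩
    induction i using Fin.lastCases with
    | last => simpa using hz0
    | cast j => simpa using hy j


lemma integral_TT_succ (n : ℕ) (f : (Fin (n+1) → ℝ) → ℝ) (hf : Continuous f) :
    ∫ x in TT (n+1), f x
      = ∫ y in TT n, ∫ z in Set.Icc 0 (1 - ∑ j, y j), f (Fin.snoc y z) := by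
  have hTm := measurableSet_TT (n+1)
  have hint : Integrable ((TT (n+1)).indicator f) := by
    rw [integrable_indicator_iff hTm]
    exact integrableOn_TT hf
  have hmp := (measurePreserving_piFinSuccAbove
      (fun _ : Fin (n+1) => (volume : Measure ℝ)) (Fin.last n)).symm
  rw [← integral_indicator hTm]
  rw [show (volume : Measure (Fin (n+1) → ℝ)) = Measure.pi fun _ => volume from volume_pi]
  rw [← hmp.integral_comp']
  have hint2 : Integrable
      (fun p : ℝ × (Fin n → ℝ) => ((TT (n+1)).indicator f)
        ((MeasurableEquiv.piFinSuccAbove (fun _ : Fin (n+1) => ℝ) (Fin.last n)).symm p))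
      ((volume : Measure ℝ).prod (Measure.pi fun _ => (volume : Measure ℝ))) := by
    have := (hmp.integrable_comp_emb (MeasurableEquiv.measurableEmbedding _)
      (g := (TT (n+1)).indicator f)).2
    rw [show Measure.pi (fun _ : Fin (n+1) => (volume : Measure ℝ)) = volume from volume_pi.symm] at this
    exact this hint
  rw [integral_prod_symm _ hint2]
  have hsymm : ∀ (p : ℝ × (Fin n → ℝ)),
      ((MeasurableEquiv.piFinSuccAbove (fun _ : Fin (n+1) => ℝ) (Fin.last n)).symm) p
        = Fin.snoc p.2 p.1 := by
    intro p
    simp [MeasurableEquiv.piFinSuccAbove, Fin.insertNthEquiv, Fin.insertNth_last']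
  calc ∫ y, ∫ z, ((TT (n+1)).indicator f)
        ((MeasurableEquiv.piFinSuccAbove (fun _ : Fin (n+1) => ℝ) (Fin.last n)).symm (z, y))
        ∂(volume : Measure ℝ) ∂(Measure.pi fun _ : Fin n => (volume : Measure ℝ))
      = ∫ y, (TT n).indicator (fun y => ∫ z in Set.Icc 0 (1 - ∑ j, y j), f (Fin.snoc y z)) y
        ∂(Measure.pi fun _ : Fin n => (volume : Measure ℝ)) := by
        congr 1
        funext y
        by_cases hy : y ∈ TT n
        · rw [Set.indicator_of_mem hy]
          rw [← integral_indicator measurableSet_Icc]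
          congr 1
          funext z
          rw [hsymm (z, y)]
          by_cases hz : z ∈ Set.Icc 0 (1 - ∑ j, y j)
          · rw [Set.indicator_of_mem hz,
              Set.indicator_of_mem ((snoc_mem_TT_iff y z).2 ⟨hy, hz⟩)]
          · rw [Set.indicator_of_notMem hz, Set.indicator_of_notMem]
            intro hmem
            exact hz ((snoc_mem_TT_iff y z).1 hmem).2
        · rw [Set.indicator_of_notMem hy]
          have : ∀ z : ℝ, ((TT (n+1)).indicator f)
              ((MeasurableEquiv.piFinSuccAbove (fun _ : Fin (n+1) => ℝ) (Fin.last n)).symm (z, y)) = 0 := by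
            intro z
            rw [hsymm (z, y)]
            apply Set.indicator_of_notMem
            intro hmem
            exact hy ((snoc_mem_TT_iff y z).1 hmem).1
          simp only [this, integral_zero]
  _ = ∫ y in TT n, ∫ z in Set.Icc 0 (1 - ∑ j, y j), f (Fin.snoc y z) := by
        rw [show Measure.pi (fun _ : Fin n => (volume : Measure ℝ)) = volume from volume_pi.symm,
          integral_indicator (measurableSet_TT n)]


lemma ftc_aux {F0 F1 : ℝ → ℝ} (hd : ∀ t, HasDerivAt F1 (F0 t) t) (hc : Continuous F0)
    (A β L : ℝ) (hβ : β ≠ 0) (hL : 0 ≤ L) :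
    ∫ z in Set.Icc 0 L, F0 (A + β * z) = (F1 (A + β * L) - F1 A) / β := by
  rw [MeasureTheory.integral_Icc_eq_integral_Ioc, ← intervalIntegral.integral_of_le hL]
  have key : ∀ t ∈ Set.uIcc 0 L, HasDerivAt (fun z => F1 (A + β * z) / β) (F0 (A + β * t)) t := by
    intro t _
    have h1 : HasDerivAt (fun z : ℝ => A + β * z) β t := by
      simpa using ((hasDerivAt_id t).const_mul β).const_add A
    have h2 := (hd (A + β * t)).comp t h1
    have h3 := h2.div_const β
    simpa [mul_div_cancel_right₀ _ hβ] using h3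
  rw [intervalIntegral.integral_eq_sub_of_hasDerivAt key
    ((hc.comp (by fun_prop)).intervalIntegrable 0 L)]
  simp only [mul_zero, add_zero]
  ring

lemma TT_zero : TT 0 = Set.univ := by
  ext x; simp [TT]

lemma integral_TT_zero (f : (Fin 0 → ℝ) → ℝ) (c : ℝ) (hf : ∀ x, f x = c) :
    ∫ x in TT 0, f x = c := by
  rw [TT_zero, Measure.restrict_univ]
  have : f = fun _ => c := funext hf
  rw [this, integral_const]
  rw [show (volume : Measure (Fin 0 → ℝ)) = Measure.pi fun _ => volume from volume_pi]
  simp [Measure.real, Measure.pi_univ]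

lemma int_one_sub : ∀ (n : ℕ) (F : ℕ → ℝ → ℝ), (∀ k, Continuous (F k)) →
    (∀ k t, HasDerivAt (F (k+1)) (F k t) t) → (∀ k, F (k+1) 0 = 0) →
    ∫ x in TT n, F 0 (1 - ∑ j, x j) = F n 1 := by
  intro n
  induction n with
  | zero =>
    intro F hc hd h0
    apply integral_TT_zero
    intro x; simp
  | succ n ih =>
    intro F hc hd h0
    rw [integral_TT_succ n (fun x => F 0 (1 - ∑ j, x j))
      ((hc 0).comp (continuous_const.sub (by fun_prop)))]
    have step : ∀ y ∈ TT n, (∫ z in Set.Icc 0 (1 - ∑ j, y j),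
        F 0 (1 - ∑ j, (Fin.snoc y z : Fin (n+1) → ℝ) j)) = F 1 (1 - ∑ j, y j) := by
      intro y hy
      have hL : (0:ℝ) ≤ 1 - ∑ j, y j := by
        have := hy.2; linarith [hy.2]
      have hsum : ∀ z : ℝ, (1 - ∑ j, (Fin.snoc y z : Fin (n+1) → ℝ) j)
          = (1 - ∑ j, y j) + (-1) * z := by
        intro z; rw [Fin.sum_univ_castSucc]; simp; ring
      calc (∫ z in Set.Icc 0 (1 - ∑ j, y j), F 0 (1 - ∑ j, (Fin.snoc y z : Fin (n+1) → ℝ) j))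
          = ∫ z in Set.Icc 0 (1 - ∑ j, y j), F 0 ((1 - ∑ j, y j) + (-1) * z) := by
            congr 1; funext z; rw [hsum z]
        _ = (F 1 ((1 - ∑ j, y j) + (-1) * (1 - ∑ j, y j)) - F 1 (1 - ∑ j, y j)) / (-1) :=
            ftc_aux (hd 0) (hc 0) _ _ _ (by norm_num) hL
        _ = F 1 (1 - ∑ j, y j) := by
            have : (1 - ∑ j, y j) + (-1) * (1 - ∑ j, y j) = 0 := by ring
            rw [this, h0 0]; ring
    calc (∫ y in TT n, ∫ z in Set.Icc 0 (1 - ∑ j, y j),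
          F 0 (1 - ∑ j, (Fin.snoc y z : Fin (n+1) → ℝ) j))
        = ∫ y in TT n, F 1 (1 - ∑ j, y j) := by
          apply setIntegral_congr_fun (measurableSet_TT n)
          intro y hy; exact step y hy
      _ = F (n+1) 1 := ih (fun k => F (k+1)) (fun k => hc (k+1)) (fun k => hd (k+1))
            (fun k => h0 (k+1))


lemma prod_erase_last {n : ℕ} (f : Fin (n+1) → ℝ) :
    ∏ j ∈ Finset.univ.erase (Fin.last n), f j = ∏ j, f (Fin.castSucc j) := by
  rw [Fin.univ_castSuccEmb, Finset.erase_cons, Finset.prod_map]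
  rfl

lemma prod_erase_castSucc {n : ℕ} (f : Fin (n+1) → ℝ) (i : Fin n) :
    ∏ j ∈ Finset.univ.erase (Fin.castSucc i), f j
      = (∏ j ∈ Finset.univ.erase i, f (Fin.castSucc j)) * f (Fin.last n) := by
  rw [Fin.univ_castSuccEmb]
  rw [Finset.erase_cons_of_ne (by simp only [Finset.mem_map, not_exists]; exact fun x h => absurd h.2 (Fin.castSucc_lt_last x).ne) (Fin.castSucc_lt_last i).ne']
  rw [Finset.prod_cons]
  rw [show (Fin.castSucc i) = Fin.castSuccEmb i from rfl, ← Finset.map_erase]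
  rw [Finset.prod_map]
  rw [mul_comm]
  rfl

lemma DD_rec (n : ℕ) (g : ℝ → ℝ) (c : Fin n → ℝ) (a d : ℝ)
    (hcinj : Function.Injective c) (ha : ∀ j, c j ≠ a) (hd' : ∀ j, c j ≠ d) (had : a ≠ d) :
    ((∑ i, g ((Fin.snoc c a : Fin (n+1) → ℝ) i) / ∏ j ∈ Finset.univ.erase i,
        ((Fin.snoc c a : Fin (n+1) → ℝ) i - (Fin.snoc c a : Fin (n+1) → ℝ) j))
     - ∑ i, g ((Fin.snoc c d : Fin (n+1) → ℝ) i) / ∏ j ∈ Finset.univ.erase i,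
        ((Fin.snoc c d : Fin (n+1) → ℝ) i - (Fin.snoc c d : Fin (n+1) → ℝ) j))
    = (a - d) * ∑ i, g ((Fin.snoc (Fin.snoc c a) d : Fin (n+2) → ℝ) i)
        / ∏ j ∈ Finset.univ.erase i,
        ((Fin.snoc (Fin.snoc c a) d : Fin (n+2) → ℝ) i
          - (Fin.snoc (Fin.snoc c a) d : Fin (n+2) → ℝ) j) := by
  have hP : ∀ i : Fin n, (∏ j ∈ Finset.univ.erase i, (c i - c j)) ≠ 0 := by
    intro i
    rw [Finset.prod_ne_zero_iff]
    intro j hj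
    exact sub_ne_zero.2 fun h => (Finset.ne_of_mem_erase hj) (hcinj h.symm)
  have hQa : (∏ j, (a - c j)) ≠ 0 := by
    rw [Finset.prod_ne_zero_iff]
    exact fun j _ => sub_ne_zero.2 fun h => ha j h.symm
  have hQd : (∏ j, (d - c j)) ≠ 0 := by
    rw [Finset.prod_ne_zero_iff]
    exact fun j _ => sub_ne_zero.2 fun h => hd' j h.symm
  have expand1 : ∀ (t : ℝ),
      (∑ i, g ((Fin.snoc c t : Fin (n+1) → ℝ) i) / ∏ j ∈ Finset.univ.erase i,
        ((Fin.snoc c t : Fin (n+1) → ℝ) i - (Fin.snoc c t : Fin (n+1) → ℝ) j))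
      = (∑ i, g (c i) / ((∏ j ∈ Finset.univ.erase i, (c i - c j)) * (c i - t)))
        + g t / ∏ j, (t - c j) := by
    intro t
    rw [Fin.sum_univ_castSucc]
    congr 1
    · apply Finset.sum_congr rfl
      intro i _
      rw [prod_erase_castSucc (fun j => (Fin.snoc c t : Fin (n+1) → ℝ) i.castSucc
        - (Fin.snoc c t : Fin (n+1) → ℝ) j) i]
      simp only [Fin.snoc_castSucc, Fin.snoc_last]
    · rw [prod_erase_last]
      simp only [Fin.snoc_castSucc, Fin.snoc_last]
  have expandE :
      (∑ i, g ((Fin.snoc (Fin.snoc c a) d : Fin (n+2) → ℝ) i)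
        / ∏ j ∈ Finset.univ.erase i,
        ((Fin.snoc (Fin.snoc c a) d : Fin (n+2) → ℝ) i
          - (Fin.snoc (Fin.snoc c a) d : Fin (n+2) → ℝ) j))
      = (∑ i, g (c i) / (((∏ j ∈ Finset.univ.erase i, (c i - c j)) * (c i - a)) * (c i - d)))
        + g a / ((∏ j, (a - c j)) * (a - d))
        + g d / ((∏ j, (d - c j)) * (d - a)) := by
    rw [Fin.sum_univ_castSucc, Fin.sum_univ_castSucc]
    congr 1
    · congr 1
      · apply Finset.sum_congr rfl
        intro i _
        rw [prod_erase_castSucc (fun j => (Fin.snoc (Fin.snoc c a) d : Fin (n+2) → ℝ) i.castSucc.castSucc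
          - (Fin.snoc (Fin.snoc c a) d : Fin (n+2) → ℝ) j) i.castSucc]
        rw [prod_erase_castSucc (fun j => (Fin.snoc (Fin.snoc c a) d : Fin (n+2) → ℝ) i.castSucc.castSucc
          - (Fin.snoc (Fin.snoc c a) d : Fin (n+2) → ℝ) j.castSucc) i]
        simp only [Fin.snoc_castSucc, Fin.snoc_last]
      · rw [prod_erase_castSucc (fun j => (Fin.snoc (Fin.snoc c a) d : Fin (n+2) → ℝ) (Fin.last n).castSucc
          - (Fin.snoc (Fin.snoc c a) d : Fin (n+2) → ℝ) j) (Fin.last n)]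
        rw [prod_erase_last (fun j => (Fin.snoc (Fin.snoc c a) d : Fin (n+2) → ℝ) (Fin.last n).castSucc
          - (Fin.snoc (Fin.snoc c a) d : Fin (n+2) → ℝ) j.castSucc)]
        simp only [Fin.snoc_castSucc, Fin.snoc_last]
    · rw [prod_erase_last]
      rw [Fin.prod_univ_castSucc]
      simp only [Fin.snoc_castSucc, Fin.snoc_last]
  rw [expand1 a, expand1 d, expandE]
  rw [add_sub_add_comm, ← Finset.sum_sub_distrib]
  rw [mul_add, mul_add, Finset.mul_sum, add_assoc]
  congr 1
  · apply Finset.sum_congr rfl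
    intro i _
    have h1 := hP i
    have h2 : c i - a ≠ 0 := sub_ne_zero.2 (ha i)
    have h3 : c i - d ≠ 0 := sub_ne_zero.2 (hd' i)
    field_simp
    ring
  · have h4 : a - d ≠ 0 := sub_ne_zero.2 had
    have h5 : d - a ≠ 0 := sub_ne_zero.2 had.symm
    field_simp
    ring


lemma continuous_pow_mul_log (k : ℕ) : Continuous (fun t : ℝ => t^(k+1) * Real.log t) := by
  have : (fun t : ℝ => t^(k+1) * Real.log t) = fun t : ℝ => t^k * (t * Real.log t) := by
    funext t; ring
  rw [this]
  exact (continuous_pow k).mul Real.continuous_mul_log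

lemma hasDerivAt_pow_mul_log (k : ℕ) (t : ℝ) :
    HasDerivAt (fun t : ℝ => t^(k+2) * Real.log t)
      ((k+2) * (t^(k+1) * Real.log t) + t^(k+1)) t := by
  rcases eq_or_ne t 0 with rfl | ht
  · simp only [zero_pow (Nat.succ_ne_zero k), Real.log_zero, mul_zero, zero_mul, add_zero,
      mul_zero]
    rw [hasDerivAt_iff_tendsto_slope]
    have hcont : Continuous (fun x : ℝ => x^k * (x * Real.log x)) :=
      (continuous_pow k).mul Real.continuous_mul_log
    have hlim : Filter.Tendsto (fun x : ℝ => x^k * (x * Real.log x)) (nhdsWithin 0 {(0:ℝ)}ᶜ) (nhds 0) := by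
      have h := hcont.continuousAt (x := (0:ℝ))
      unfold ContinuousAt at h
      simp only [zero_pow_eq, Real.log_zero, mul_zero, zero_mul] at h
      exact h.mono_left nhdsWithin_le_nhds
    apply hlim.congr'
    filter_upwards [self_mem_nhdsWithin] with x hx
    have hx0 : x ≠ 0 := hx
    rw [slope_def_field]
    simp only [sub_zero]
    field_simp
    ring
  · have h1 := (hasDerivAt_pow (k+2) t).mul (Real.hasDerivAt_log ht)
    refine h1.congr_deriv ?_
    rw [show k + 2 - 1 = k + 1 from rfl]
    push_cast
    field_simp
    ring


lemma int_last (n : ℕ) (F : ℕ → ℝ → ℝ) (hc : ∀ k, Continuous (F k))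
    (hd : ∀ k t, HasDerivAt (F (k+1)) (F k t) t) (h0 : ∀ k, F (k+1) 0 = 0) :
    ∫ x in TT (n+1), F 0 (x (Fin.last n)) = F (n+1) 1 := by
  rw [integral_TT_succ n (fun x => F 0 (x (Fin.last n)))
      ((hc 0).comp (continuous_apply (Fin.last n)))]
  have step : ∀ y ∈ TT n, (∫ z in Set.Icc 0 (1 - ∑ j, y j),
      F 0 ((Fin.snoc y z : Fin (n+1) → ℝ) (Fin.last n))) = F 1 (1 - ∑ j, y j) := by
    intro y hy
    have hL : (0:ℝ) ≤ 1 - ∑ j, y j := by linarith [hy.2]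
    calc (∫ z in Set.Icc 0 (1 - ∑ j, y j), F 0 ((Fin.snoc y z : Fin (n+1) → ℝ) (Fin.last n)))
        = ∫ z in Set.Icc 0 (1 - ∑ j, y j), F 0 (0 + 1 * z) := by
          congr 1; funext z; simp
      _ = (F 1 (0 + 1 * (1 - ∑ j, y j)) - F 1 0) / 1 :=
          ftc_aux (hd 0) (hc 0) _ _ _ one_ne_zero hL
      _ = F 1 (1 - ∑ j, y j) := by rw [h0 0]; simp
  calc (∫ y in TT n, ∫ z in Set.Icc 0 (1 - ∑ j, y j),
        F 0 ((Fin.snoc y z : Fin (n+1) → ℝ) (Fin.last n)))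
      = ∫ y in TT n, F 1 (1 - ∑ j, y j) :=
        setIntegral_congr_fun (measurableSet_TT n) step
    _ = F (n+1) 1 := int_one_sub n (fun k => F (k+1)) (fun k => hc (k+1))
        (fun k => hd (k+1)) (fun k => h0 (k+1))

lemma TT_comp_equiv {n : ℕ} (σ : Equiv.Perm (Fin n)) (x : Fin n → ℝ) :
    (fun i => x (σ i)) ∈ TT n ↔ x ∈ TT n := by
  constructor
  · rintro ⟨h0, h1⟩
    refine ⟨fun j => by simpa using h0 (σ.symm j), ?_⟩
    rwa [Equiv.sum_comp σ (fun i => x i)] at h1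
  · rintro ⟨h0, h1⟩
    refine ⟨fun j => h0 (σ j), ?_⟩
    rw [Equiv.sum_comp σ (fun i => x i)]
    exact h1

lemma int_coord (n : ℕ) (p : Fin (n+1)) (F : ℕ → ℝ → ℝ) (hc : ∀ k, Continuous (F k))
    (hd : ∀ k t, HasDerivAt (F (k+1)) (F k t) t) (h0 : ∀ k, F (k+1) 0 = 0) :
    ∫ x in TT (n+1), F 0 (x p) = F (n+1) 1 := by
  have hmp := MeasureTheory.volume_measurePreserving_piCongrLeft
      (fun _ : Fin (n+1) => ℝ) (Equiv.swap p (Fin.last n))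
  set e := MeasurableEquiv.piCongrLeft (fun _ : Fin (n+1) => ℝ) (Equiv.swap p (Fin.last n))
    with he
  have hpre : e ⁻¹' TT (n+1) = TT (n+1) := by
    ext x
    have hx : e x = fun i => x ((Equiv.swap p (Fin.last n)).symm i) := by
      funext i
      simp [he, MeasurableEquiv.piCongrLeft, Equiv.piCongrLeft, Equiv.piCongrLeft']
      exact (eqRec_eq_cast _ _).trans (cast_eq _ _)
    simp only [Set.mem_preimage, hx]
    exact TT_comp_equiv ((Equiv.swap p (Fin.last n)).symm) x
  have key := hmp.setIntegral_preimage_emb (MeasurableEquiv.measurableEmbedding e)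
      (fun x => F 0 (x p)) (TT (n+1))
  rw [hpre] at key
  rw [← key]
  have : ∀ x : Fin (n+1) → ℝ, (e x) p = x (Fin.last n) := by
    intro x
    have hx : e x = fun i => x ((Equiv.swap p (Fin.last n)).symm i) := by
      funext i
      simp [he, MeasurableEquiv.piCongrLeft, Equiv.piCongrLeft, Equiv.piCongrLeft']
      exact (eqRec_eq_cast _ _).trans (cast_eq _ _)
    rw [hx]
    simp [Equiv.symm_swap, Equiv.swap_apply_left]
  calc (∫ x in TT (n+1), F 0 ((e x) p))
      = ∫ x in TT (n+1), F 0 (x (Fin.last n)) := by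
        apply setIntegral_congr_fun (measurableSet_TT (n+1))
        intro x _; simp only []; rw [this x]
    _ = F (n+1) 1 := int_last n F hc hd h0


lemma snoc_injective {n : ℕ} {c : Fin n → ℝ} {a : ℝ} (hc : Function.Injective c)
    (ha : ∀ j, c j ≠ a) : Function.Injective (Fin.snoc c a : Fin (n+1) → ℝ) := by
  intro i j h
  induction i using Fin.lastCases with
  | last =>
    induction j using Fin.lastCases with
    | last => rfl
    | cast j => rw [Fin.snoc_last, Fin.snoc_castSucc] at h; exact absurd h.symm (ha j)
  | cast i =>
    induction j using Fin.lastCases with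
    | last => rw [Fin.snoc_last, Fin.snoc_castSucc] at h; exact absurd h (ha i)
    | cast j => rw [Fin.snoc_castSucc, Fin.snoc_castSucc] at h
                exact congrArg Fin.castSucc (hc h)

lemma int_lin : ∀ (n : ℕ) (b : Fin (n+1) → ℝ), Function.Injective b →
    ∀ (F : ℕ → ℝ → ℝ), (∀ k, Continuous (F k)) → (∀ k t, HasDerivAt (F (k+1)) (F k t) t) →
    (∫ x in TT n, F 0 (b (Fin.last n) + ∑ j, (b (Fin.castSucc j) - b (Fin.last n)) * x j))
      = ∑ i, F n (b i) / ∏ j ∈ Finset.univ.erase i, (b i - b j) := by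
  intro n
  induction n with
  | zero =>
    intro b hb F hc hd
    rw [integral_TT_zero _ (F 0 (b (Fin.last 0))) (fun x => by simp)]
    simp [Fin.last]
  | succ n ih =>
    intro b hb F hc hd
    set c : Fin n → ℝ := fun j => b (j.castSucc.castSucc) with hcdef
    set a : ℝ := b ((Fin.last n).castSucc) with hadef
    set d : ℝ := b (Fin.last (n+1)) with hddef
    have hne_idx : (Fin.last n).castSucc ≠ Fin.last (n+1) := (Fin.castSucc_lt_last (Fin.last n)).ne
    have had : a ≠ d := fun h => hne_idx (hb h)
    have hβ : a - d ≠ 0 := sub_ne_zero.2 had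
    have hcinj : Function.Injective c := fun i j h => by
      have := hb h
      exact Fin.castSucc_injective _ (Fin.castSucc_injective _ this)
    have hca : ∀ j, c j ≠ a := fun j h => by
      have := hb h
      have : ((j.castSucc.castSucc : Fin (n+2)) : ℕ) = (((Fin.last n).castSucc : Fin (n+2)) : ℕ) :=
        congrArg Fin.val this
      simp at this
      exact absurd this j.isLt.ne
    have hcd : ∀ j, c j ≠ d := fun j h => by
      have h2 := hb h
      have : ((j.castSucc.castSucc : Fin (n+2)) : ℕ) = ((Fin.last (n+1) : Fin (n+2)) : ℕ) :=
        congrArg Fin.val h2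
      simp at this
      omega
    have hb_eq : b = (Fin.snoc (Fin.snoc c a) d : Fin (n+2) → ℝ) := by
      funext i
      induction i using Fin.lastCases with
      | last => rw [Fin.snoc_last]
      | cast j =>
        rw [Fin.snoc_castSucc]
        induction j using Fin.lastCases with
        | last => rw [Fin.snoc_last]
        | cast j' => rw [Fin.snoc_castSucc]
    -- step 1: split off last variable
    rw [integral_TT_succ n
        (fun x => F 0 (d + ∑ j, (b (Fin.castSucc j) - d) * x j))
        ((hc 0).comp (continuous_const.add (by fun_prop)))]
    have hsnoc : ∀ (y : Fin n → ℝ) (z : ℝ),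
        (d + ∑ j, (b (Fin.castSucc j) - d)
          * (Fin.snoc y z : Fin (n+1) → ℝ) j)
        = (d + ∑ j, (c j - d) * y j) + (a - d) * z := by
      intro y z
      rw [Fin.sum_univ_castSucc]
      simp only [Fin.snoc_castSucc, Fin.snoc_last, ← hddef, ← hadef, hcdef]
      ring
    have step : ∀ y ∈ TT n, (∫ z in Set.Icc 0 (1 - ∑ j, y j),
        F 0 (d + ∑ j, (b (Fin.castSucc j) - d)
          * (Fin.snoc y z : Fin (n+1) → ℝ) j))
        = (F 1 (a + ∑ j, (c j - a) * y j) - F 1 (d + ∑ j, (c j - d) * y j)) / (a - d) := by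
      intro y hy
      have hL : (0:ℝ) ≤ 1 - ∑ j, y j := by linarith [hy.2]
      calc (∫ z in Set.Icc 0 (1 - ∑ j, y j),
            F 0 (d + ∑ j, (b (Fin.castSucc j) - d)
              * (Fin.snoc y z : Fin (n+1) → ℝ) j))
          = ∫ z in Set.Icc 0 (1 - ∑ j, y j),
              F 0 ((d + ∑ j, (c j - d) * y j) + (a - d) * z) := by
            congr 1; funext z; rw [hsnoc y z]
        _ = (F 1 ((d + ∑ j, (c j - d) * y j) + (a - d) * (1 - ∑ j, y j))
              - F 1 (d + ∑ j, (c j - d) * y j)) / (a - d) :=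
            ftc_aux (hd 0) (hc 0) _ _ _ hβ hL
        _ = (F 1 (a + ∑ j, (c j - a) * y j) - F 1 (d + ∑ j, (c j - d) * y j)) / (a - d) := by
            have harg : (d + ∑ j, (c j - d) * y j) + (a - d) * (1 - ∑ j, y j)
                = a + ∑ j, (c j - a) * y j := by
              have h2 : ∑ j, (c j - a) * y j = ∑ j, ((c j - d) * y j - (a - d) * y j) := by
                apply Finset.sum_congr rfl; intro j _; ring
              rw [h2, Finset.sum_sub_distrib, ← Finset.mul_sum]
              ring
            rw [harg]
    rw [setIntegral_congr_fun (measurableSet_TT n) step]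
    have hint1 : IntegrableOn (fun y => F 1 (a + ∑ j, (c j - a) * y j)) (TT n) :=
      integrableOn_TT ((hc 1).comp (continuous_const.add (by fun_prop)))
    have hint2 : IntegrableOn (fun y => F 1 (d + ∑ j, (c j - d) * y j)) (TT n) :=
      integrableOn_TT ((hc 1).comp (continuous_const.add (by fun_prop)))
    rw [show (fun y : Fin n → ℝ => (F 1 (a + ∑ j, (c j - a) * y j)
        - F 1 (d + ∑ j, (c j - d) * y j)) / (a - d))
      = (fun y : Fin n → ℝ => (F 1 (a + ∑ j, (c j - a) * y j)
        - F 1 (d + ∑ j, (c j - d) * y j)) * (a - d)⁻¹) from funext fun y => div_eq_mul_inv _ _]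
    rw [integral_mul_const, integral_sub hint1 hint2]
    -- apply ih twice
    have ih1 := ih (Fin.snoc c a) (snoc_injective hcinj hca) (fun k => F (k+1))
        (fun k => hc (k+1)) (fun k => hd (k+1))
    have ih2 := ih (Fin.snoc c d) (snoc_injective hcinj hcd) (fun k => F (k+1))
        (fun k => hc (k+1)) (fun k => hd (k+1))
    simp only [Fin.snoc_last, Fin.snoc_castSucc] at ih1 ih2
    rw [ih1, ih2]
    rw [hb_eq]
    rw [DD_rec n (F (n+1)) c a d hcinj hca hcd had]
    rw [mul_comm ((a-d)) _, mul_assoc]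
    rw [mul_inv_cancel₀ hβ, mul_one]


noncomputable def GG (k : ℕ) (t : ℝ) : ℝ :=
  (-(t^(k+1) * Real.log t) + (harmonicNum (k+1) - 1) * t^(k+1)) / (k+1).factorial

noncomputable def PP (k : ℕ) (t : ℝ) : ℝ := t^(k+1) / (k+1).factorial

noncomputable def VV (k : ℕ) (t : ℝ) : ℝ := t^k / k.factorial

lemma GG_cont (k : ℕ) : Continuous (GG k) :=
  (((continuous_pow_mul_log k).neg).add (continuous_const.mul (continuous_pow _))).div_const _

lemma harmonicNum_succ (k : ℕ) : harmonicNum (k+1) = harmonicNum k + 1/(k+1) := by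
  simp [harmonicNum, Finset.sum_range_succ]

lemma GG_deriv (k : ℕ) (t : ℝ) : HasDerivAt (GG (k+1)) (GG k t) t := by
  have h1 := ((hasDerivAt_pow_mul_log k t).neg.add
    ((hasDerivAt_pow (k+2) t).const_mul (harmonicNum (k+2) - 1))).div_const ((k+2).factorial : ℝ)
  refine h1.congr_deriv ?_
  rw [GG, harmonicNum_succ (k+1)]
  have hf : ((k+2).factorial : ℝ) = (k+2) * (k+1).factorial := by
    rw [show k+2 = (k+1)+1 from rfl, Nat.factorial_succ]
    push_cast; ring
  have hne1 : ((k+1).factorial : ℝ) ≠ 0 := Nat.cast_ne_zero.2 (Nat.factorial_ne_zero _)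
  have hne2 : ((k+2):ℝ) ≠ 0 := by positivity
  rw [hf]
  have hpow : k + 2 - 1 = k + 1 := rfl
  rw [hpow]
  push_cast
  field_simp
  ring

lemma GG_zero (k : ℕ) : GG (k+1) 0 = 0 := by
  simp [GG]

lemma GG_zero_eq (t : ℝ) : GG 0 t = Real.negMulLog t := by
  simp [GG, harmonicNum, Real.negMulLog]

lemma PP_cont (k : ℕ) : Continuous (PP k) := (continuous_pow _).div_const _

lemma PP_deriv (k : ℕ) (t : ℝ) : HasDerivAt (PP (k+1)) (PP k t) t := by
  have h1 := (hasDerivAt_pow (k+2) t).div_const ((k+2).factorial : ℝ)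
  refine h1.congr_deriv ?_
  rw [PP]
  have hf : ((k+2).factorial : ℝ) = (k+2) * (k+1).factorial := by
    rw [show k+2 = (k+1)+1 from rfl, Nat.factorial_succ]; push_cast; ring
  have hne1 : ((k+1).factorial : ℝ) ≠ 0 := Nat.cast_ne_zero.2 (Nat.factorial_ne_zero _)
  have hne2 : ((k+2):ℝ) ≠ 0 := by positivity
  rw [hf, show k + 2 - 1 = k + 1 from rfl]
  push_cast
  field_simp

lemma PP_zero (k : ℕ) : PP (k+1) 0 = 0 := by simp [PP]

lemma VV_cont (k : ℕ) : Continuous (VV k) := (continuous_pow _).div_const _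

lemma VV_deriv (k : ℕ) (t : ℝ) : HasDerivAt (VV (k+1)) (VV k t) t := by
  have h1 := (hasDerivAt_pow (k+1) t).div_const ((k+1).factorial : ℝ)
  refine h1.congr_deriv ?_
  rw [VV]
  have hf : ((k+1).factorial : ℝ) = (k+1) * k.factorial := by
    rw [Nat.factorial_succ]; push_cast; ring
  have hne1 : ((k).factorial : ℝ) ≠ 0 := Nat.cast_ne_zero.2 (Nat.factorial_ne_zero _)
  have hne2 : ((k+1):ℝ) ≠ 0 := by positivity
  rw [hf, show k + 1 - 1 = k from rfl]
  push_cast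
  field_simp

lemma VV_zero (k : ℕ) : VV (k+1) 0 = 0 := by simp [VV]


lemma PP_zero_eq (t : ℝ) : PP 0 t = t := by simp [PP]

lemma VV_zero_eq (t : ℝ) : VV 0 t = 1 := by simp [VV]

lemma integral_TT_one (n : ℕ) : ∫ x in TT n, (1:ℝ) = 1 / n.factorial := by
  have h := int_one_sub n VV VV_cont VV_deriv VV_zero
  have : (∫ x in TT n, VV 0 (1 - ∑ j, x j)) = ∫ x in TT n, (1:ℝ) := by
    congr 1; funext x; rw [VV_zero_eq]
  rw [this] at h
  rw [h, VV]
  simp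

lemma integral_TT_coord (n : ℕ) (j : Fin n) :
    ∫ x in TT n, x j = 1 / (n+1).factorial := by
  cases n with
  | zero => exact absurd j.isLt (by omega)
  | succ m =>
    have h := int_coord m j PP PP_cont PP_deriv PP_zero
    have heq : (∫ x in TT (m+1), PP 0 (x j)) = ∫ x in TT (m+1), x j := by
      congr 1; funext x; rw [PP_zero_eq]
    rw [heq] at h
    rw [h, PP]
    norm_num

lemma power_identity (n : ℕ) (b : Fin (n+1) → ℝ) (hb : Function.Injective b) :
    ∑ i, (b i)^(n+1) / ∏ j ∈ Finset.univ.erase i, (b i - b j) = ∑ i, b i := by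
  have h := int_lin n b hb PP PP_cont PP_deriv
  set L := b (Fin.last n) with hL
  -- compute the integral side
  have hlhs : (∫ x in TT n, PP 0 (L + ∑ j, (b (Fin.castSucc j) - L) * x j))
      = L / n.factorial + (∑ j, (b (Fin.castSucc j) - L)) / (n+1).factorial := by
    have heq : (fun x : Fin n → ℝ => PP 0 (L + ∑ j, (b (Fin.castSucc j) - L) * x j))
        = fun x : Fin n → ℝ => L * 1 + ∑ j, (b (Fin.castSucc j) - L) * x j := by
      funext x; rw [PP_zero_eq]; ring
    rw [heq]
    have hi1 : IntegrableOn (fun x : Fin n → ℝ => L * 1) (TT n) :=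
      integrableOn_TT continuous_const
    have hi2 : IntegrableOn (fun x : Fin n → ℝ => ∑ j, (b (Fin.castSucc j) - L) * x j) (TT n) :=
      integrableOn_TT (by fun_prop)
    rw [integral_add hi1 hi2]
    have hterm1 : (∫ x in TT n, L * 1) = L / n.factorial := by
      rw [integral_const_mul, integral_TT_one]
      ring
    have hterm2 : (∫ x in TT n, ∑ j, (b (Fin.castSucc j) - L) * x j)
        = (∑ j, (b (Fin.castSucc j) - L)) / (n+1).factorial := by
      rw [integral_finset_sum _ (f := fun j (x : Fin n → ℝ) => (b (Fin.castSucc j) - L) * x j) (fun j _ =>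
        (integrableOn_TT ((continuous_const.mul (continuous_apply j)) : Continuous
          (fun x : Fin n → ℝ => (b (Fin.castSucc j) - L) * x j))))]
      rw [Finset.sum_div]
      apply Finset.sum_congr rfl
      intro j _
      rw [integral_const_mul, integral_TT_coord]
      ring
    rw [hterm1, hterm2]
  rw [hlhs] at h
  -- now h : L/n! + (Σ (b j.cc − L))/(n+1)! = Σ_i PP n (b i) / ∏ ...
  have hrhs : (∑ i, PP n (b i) / ∏ j ∈ Finset.univ.erase i, (b i - b j))
      = (∑ i, (b i)^(n+1) / ∏ j ∈ Finset.univ.erase i, (b i - b j)) / (n+1).factorial := by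
    rw [Finset.sum_div]
    apply Finset.sum_congr rfl
    intro i _
    rw [PP, div_div, div_div, mul_comm]
  rw [hrhs] at h
  have hfac : ((n+1).factorial : ℝ) = (n+1) * n.factorial := by
    rw [Nat.factorial_succ]; push_cast; ring
  have hne1 : ((n).factorial : ℝ) ≠ 0 := Nat.cast_ne_zero.2 (Nat.factorial_ne_zero _)
  have hne2 : ((n+1):ℝ) ≠ 0 := by positivity
  have hsum : ∑ i, b i = ∑ j, b (Fin.castSucc j) + L := by
    rw [Fin.sum_univ_castSucc, ← hL]
  have hsub : (∑ j, (b (Fin.castSucc j) - L)) = ∑ j, b (Fin.castSucc j) - n * L := by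
    rw [Finset.sum_sub_distrib, Finset.sum_const, Finset.card_univ, Fintype.card_fin]
    simp [nsmul_eq_mul]
  have hfne : ((n+1).factorial : ℝ) ≠ 0 := Nat.cast_ne_zero.2 (Nat.factorial_ne_zero _)
  have hX : (∑ i, (b i)^(n+1) / ∏ j ∈ Finset.univ.erase i, (b i - b j))
      = (L / n.factorial + (∑ j, (b (Fin.castSucc j) - L)) / (n+1).factorial)
        * (n+1).factorial := by
    rw [h, div_mul_cancel₀ _ hfne]
  rw [hX, hsub, hsum, hfac]
  field_simp
  ring
lemma GG_one (n : ℕ) : GG n 1 = (harmonicNum (n+1) - 1) / (n+1).factorial := by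
  simp [GG]

/-- For an N×N bi-stochastic matrix B whose rows have pairwise distinct
entries, `∫ [H(Bλ) - H(λ)] dμ_N(λ) = Q(Bᵀ)`. -/
theorem avg_entropy_gain_bistochastic (N : ℕ) (hN : 1 ≤ N)
    (B : Matrix (Fin N) (Fin N) ℝ) (hB : IsBistochastic B)
    (hrows : ∀ i : Fin N, ∀ j k : Fin N, j ≠ k → B i j ≠ B i k) :
    simplexIntegral N (fun lam => shannonEntropy (B.mulVec lam) - shannonEntropy lam) =
      (1 / N) * ∑ i, subentropy (fun j => B i j) := by
  obtain ⟨n, rfl⟩ : ∃ n, N = n + 1 := ⟨N - 1, (Nat.succ_pred_eq_of_pos hN).symm⟩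
  have hmap_cast : ∀ (x : Fin n → ℝ) (j : Fin n),
      simplexMap (n+1) x (Fin.castSucc j) = x j := by
    intro x j
    simp only [simplexMap]
    rw [dif_pos (show ((Fin.castSucc j : Fin (n+1)) : ℕ) < (n+1) - 1 from j.isLt)]
    exact congrArg x (Fin.ext rfl)
  have hmap_last : ∀ (x : Fin n → ℝ), simplexMap (n+1) x (Fin.last n) = 1 - ∑ j, x j := by
    intro x
    simp only [simplexMap]
    rw [dif_neg (by simp)]
    rfl
  have hmapc : Continuous (fun x : Fin n → ℝ => simplexMap (n+1) x) := by
    apply continuous_pi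
    intro i
    simp only [simplexMap]
    by_cases h : (i : ℕ) < (n+1) - 1
    · simp only [dif_pos h]
      exact continuous_apply _
    · simp only [dif_neg h]
      fun_prop
  have hinj : ∀ i, Function.Injective (fun j => B i j) := by
    intro i j k h
    by_contra hne
    exact hrows i j k hne h
  have hrow : ∀ (i : Fin (n+1)) (x : Fin n → ℝ),
      (B.mulVec (simplexMap (n+1) x)) i
        = B i (Fin.last n) + ∑ j, (B i (Fin.castSucc j) - B i (Fin.last n)) * x j := by
    intro i x
    simp only [Matrix.mulVec, dotProduct]
    rw [Fin.sum_univ_castSucc]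
    simp only [hmap_cast, hmap_last]
    have h2 : ∑ j, (B i (Fin.castSucc j) - B i (Fin.last n)) * x j
        = ∑ j, (B i (Fin.castSucc j) * x j - B i (Fin.last n) * x j) := by
      apply Finset.sum_congr rfl; intro j _; ring
    rw [h2, Finset.sum_sub_distrib, ← Finset.mul_sum]
    ring
  -- per-row integral
  have hint_row : ∀ i : Fin (n+1),
      (∫ x in TT n, Real.negMulLog ((B.mulVec (simplexMap (n+1) x)) i))
        = (subentropy (fun j => B i j) + (harmonicNum (n+1) - 1)) / (n+1).factorial := by
    intro i
    have h1 : (∫ x in TT n, Real.negMulLog ((B.mulVec (simplexMap (n+1) x)) i))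
        = ∫ x in TT n, GG 0 (B i (Fin.last n)
            + ∑ j, (B i (Fin.castSucc j) - B i (Fin.last n)) * x j) := by
      congr 1; funext x; rw [GG_zero_eq, hrow i x]
    rw [h1, int_lin n (fun j => B i j) (hinj i) GG GG_cont GG_deriv]
    have hpt : ∀ j : Fin (n+1),
        GG n (B i j) / ∏ k ∈ Finset.univ.erase j, (B i j - B i k)
          = (-(B i j ^ (n+1) * Real.log (B i j)
                / ∏ k ∈ Finset.univ.erase j, (B i j - B i k))
             + (harmonicNum (n+1) - 1) * (B i j ^ (n+1)
                / ∏ k ∈ Finset.univ.erase j, (B i j - B i k)))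
            * (((n+1).factorial : ℝ))⁻¹ := by
      intro j
      rw [GG]
      ring
    rw [Finset.sum_congr rfl (fun j _ => hpt j), ← Finset.sum_mul, Finset.sum_add_distrib]
    rw [Finset.sum_neg_distrib, ← Finset.mul_sum]
    rw [power_identity n (fun j => B i j) (hinj i), hB.2.1 i]
    rw [show (-∑ j, B i j ^ (n+1) * Real.log (B i j)
        / ∏ k ∈ Finset.univ.erase j, (B i j - B i k)) = subentropy (fun j => B i j) from rfl]
    rw [mul_one, div_eq_mul_inv]
  -- coordinate integrals
  have hGGfam0 : ∀ k : ℕ, GG (k+1) 0 = 0 := GG_zero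
  have hcoord : ∀ i : Fin (n+1),
      (∫ x in TT n, Real.negMulLog (simplexMap (n+1) x i))
        = (harmonicNum (n+1) - 1) / (n+1).factorial := by
    intro i
    induction i using Fin.lastCases with
    | last =>
      have h1 : (∫ x in TT n, Real.negMulLog (simplexMap (n+1) x (Fin.last n)))
          = ∫ x in TT n, GG 0 (1 - ∑ j, x j) := by
        congr 1; funext x; rw [GG_zero_eq, hmap_last x]
      rw [h1, int_one_sub n GG GG_cont GG_deriv hGGfam0, GG_one]
    | cast j =>
      have h1 : (∫ x in TT n, Real.negMulLog (simplexMap (n+1) x (Fin.castSucc j)))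
          = ∫ x in TT n, GG 0 (x j) := by
        congr 1; funext x; rw [GG_zero_eq, hmap_cast x j]
      rw [h1]
      cases n with
      | zero => exact absurd j.isLt (by omega)
      | succ m =>
        rw [int_coord m j GG GG_cont GG_deriv hGGfam0, GG_one]
  -- main computation
  rw [simplexIntegral]
  rw [show ((n+1) - 1).factorial = n.factorial from rfl]
  rw [show solidSimplex (n+1) = TT n from rfl]
  show (n.factorial : ℝ) * (∫ x in TT n, (shannonEntropy (B.mulVec (simplexMap (n+1) x))
      - shannonEntropy (simplexMap (n+1) x)))
    = 1 / (((n + 1 : ℕ)) : ℝ) * ∑ i, subentropy fun j => B i j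
  have hc1 : ∀ i : Fin (n+1), Continuous
      (fun x : Fin n → ℝ => Real.negMulLog ((B.mulVec (simplexMap (n+1) x)) i)) := by
    intro i
    apply Real.continuous_negMulLog.comp
    have : (fun x : Fin n → ℝ => (B.mulVec (simplexMap (n+1) x)) i)
        = fun x => ∑ j, B i j * simplexMap (n+1) x j := by
      funext x; simp only [Matrix.mulVec, dotProduct]
    rw [this]
    apply continuous_finset_sum
    intro j _
    exact continuous_const.mul ((continuous_apply j).comp hmapc)
  have hc2 : ∀ i : Fin (n+1), Continuous
      (fun x : Fin n → ℝ => Real.negMulLog (simplexMap (n+1) x i)) := by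
    intro i
    exact Real.continuous_negMulLog.comp ((continuous_apply i).comp hmapc)
  have hsplit : (∫ x in TT n, (shannonEntropy (B.mulVec (simplexMap (n+1) x))
        - shannonEntropy (simplexMap (n+1) x)))
      = (∑ i, ∫ x in TT n, Real.negMulLog ((B.mulVec (simplexMap (n+1) x)) i))
        - (∑ i, ∫ x in TT n, Real.negMulLog (simplexMap (n+1) x i)) := by
    rw [← integral_finset_sum _ (fun i _ => integrableOn_TT (hc1 i)),
      ← integral_finset_sum _ (fun i _ => integrableOn_TT (hc2 i))]
    rw [← integral_sub (integrableOn_TT (by exact continuous_finset_sum _ (fun i _ => hc1 i)))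
      (integrableOn_TT (by exact continuous_finset_sum _ (fun i _ => hc2 i)))]
    rfl
  rw [hsplit]
  rw [Finset.sum_congr rfl (fun i _ => hint_row i),
    Finset.sum_congr rfl (fun i _ => hcoord i)]
  rw [Finset.sum_const, Finset.card_univ, Fintype.card_fin]
  rw [← Finset.sum_div, Finset.sum_add_distrib, Finset.sum_const, Finset.card_univ,
    Fintype.card_fin, nsmul_eq_mul, nsmul_eq_mul]
  have hfac : ((n+1).factorial : ℝ) = (n+1) * n.factorial := by
    rw [Nat.factorial_succ]; push_cast; ring
  have hne1 : ((n).factorial : ℝ) ≠ 0 := Nat.cast_ne_zero.2 (Nat.factorial_ne_zero _)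
  have hne2 : ((n:ℝ)+1) ≠ 0 := by positivity
  rw [hfac]
  push_cast
  field_simp
  ring
end

section
/- (Theorem 1, coherence generating power of a unitary channel.) Let N ≥ 1 and let U be an N×N unitary matrix with complex entries u_{ij}, and let B(U) be the N×N real matrix with entries |u_{ij}|². Assume each row of B(U) has pairwise distinct entries. Then the coherence generating power of the unitary channel Ad_U, defined as the average relative-entropy coherence CGP(U) = ∫ [H(B(U)λ) − H(λ)] dμ_N(λ) of the state U diag(λ) U† over incoherent states diag(λ) with λ drawn from the uniform measure on the simplex, equals the average subentropy of the rows of B(U): CGP(U) = Q(B(U)ᵀ) = (1/N) Σ_{i=1}^N Q(b_i), where b_1, …, b_N are the rows of B(U). (Here H(B(U)λ) is the Shannon entropy of the diagonal of U diag(λ) U† and H(λ) is its von Neumann entropy, so H(B(U)λ) − H(λ) is the relative entropy of coherence of U diag(λ) U†.) -/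
open MeasureTheory Real

lemma harmonicNum_one : harmonicNum 1 = 1 := by
  unfold harmonicNum; simp

/-- iterated antiderivatives of negMulLog -/
noncomputable def phi (k : ℕ) (t : ℝ) : ℝ :=
  (t ^ k * Real.negMulLog t + (harmonicNum (k + 1) - 1) * t ^ (k + 1)) / (k + 1).factorial

lemma phi_eq_log (k : ℕ) (t : ℝ) :
    phi k t = (-Real.log t + (harmonicNum (k + 1) - 1)) * t ^ (k + 1) / (k + 1).factorial := by
  unfold phi Real.negMulLog
  ring

lemma continuous_phi (k : ℕ) : Continuous (phi k) := by
  unfold phi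
  fun_prop

lemma phi_zero_eq : phi 0 = Real.negMulLog := by
  funext t
  unfold phi
  simp [harmonicNum_one]

lemma phi_at_zero (k : ℕ) : phi k 0 = 0 := by
  rw [phi_eq_log]; simp

lemma phi_one (k : ℕ) : phi k 1 = (harmonicNum (k+1) - 1) / (k+1).factorial := by
  unfold phi; simp

lemma hasDerivAt_phi (k : ℕ) {t : ℝ} (ht : 0 ≤ t) : HasDerivAt (phi (k+1)) (phi k t) t := by
  rcases eq_or_lt_of_le ht with rfl | ht
  · -- t = 0
    rw [phi_at_zero]
    rw [hasDerivAt_iff_tendsto_slope]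
    have hG : Continuous (fun h : ℝ =>
        (h ^ k * Real.negMulLog h + (harmonicNum (k + 2) - 1) * h ^ (k + 1)) / (k + 2).factorial) := by
      fun_prop
    have h2 : Filter.Tendsto (fun h : ℝ =>
        (h ^ k * Real.negMulLog h + (harmonicNum (k + 2) - 1) * h ^ (k + 1)) / (k + 2).factorial)
        (nhdsWithin 0 {(0:ℝ)}ᶜ) (nhds 0) := by
      have h2 := (hG.tendsto 0).mono_left (nhdsWithin_le_nhds (s := {(0:ℝ)}ᶜ))
      simpa using h2
    refine h2.congr' ?_
    filter_upwards [self_mem_nhdsWithin] with h hh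
    have hh' : h ≠ 0 := hh
    simp only [slope_def_field, div_sub_div_same]
    rw [phi_at_zero]
    unfold phi
    field_simp
    ring
  · -- t > 0
    have hlog : HasDerivAt Real.log t⁻¹ t := Real.hasDerivAt_log (ne_of_gt ht)
    have hpow : HasDerivAt (fun s : ℝ => s ^ (k+2)) ((k+2) * t ^ (k+1)) t := by
      simpa using hasDerivAt_pow (k+2) t
    have h1 : HasDerivAt (fun s : ℝ => s ^ (k+2) * Real.log s)
        ((k+2) * t ^ (k+1) * Real.log t + t ^ (k+2) * t⁻¹) t := hpow.mul hlog
    have h2 : HasDerivAt (fun s : ℝ =>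
        (-(s ^ (k+2) * Real.log s) + (harmonicNum (k + 2) - 1) * s ^ (k+2)) / (k + 2).factorial)
        ((-((k+2) * t ^ (k+1) * Real.log t + t ^ (k+2) * t⁻¹)
          + (harmonicNum (k + 2) - 1) * ((k+2) * t ^ (k+1))) / (k + 2).factorial) t := by
      exact ((h1.neg.add (hpow.const_mul _))).div_const _
    have heq : (fun s : ℝ =>
        (-(s ^ (k+2) * Real.log s) + (harmonicNum (k + 2) - 1) * s ^ (k+2)) / (k + 2).factorial)
        = phi (k+1) := by
      funext s
      rw [phi_eq_log]
      ring_nf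
    rw [heq] at h2
    convert h2 using 1
    rw [phi_eq_log]
    have hfac : ((k+2).factorial : ℝ) = (k+2) * (k+1).factorial := by
      rw [show k+2 = (k+1)+1 from rfl, Nat.factorial_succ]
      push_cast; ring
    have hh : harmonicNum (k+2) = harmonicNum (k+1) + 1/((k:ℝ)+2) := by
      have h3 := harmonicNum_succ (k+1)
      rw [show k+1+1 = k+2 from rfl] at h3
      rw [h3]
      push_cast
      ring_nf
    rw [hh, hfac]
    have h2ne : ((k:ℝ)+2) ≠ 0 := by positivity
    have hfne : ((k+1).factorial : ℝ) ≠ 0 := by positivity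
    field_simp
    ring

lemma integral_phi_affine {k : ℕ} {c d L : ℝ} (hL : 0 ≤ L) (hd : d ≠ 0)
    (hpos : ∀ t ∈ Set.uIcc (0:ℝ) L, 0 ≤ c + t * d) :
    ∫ t in (0:ℝ)..L, phi k (c + t * d) = (phi (k+1) (c + L * d) - phi (k+1) c) * d⁻¹ := by
  have hderiv : ∀ t ∈ Set.uIcc (0:ℝ) L,
      HasDerivAt (fun t => phi (k+1) (c + t * d) * d⁻¹) (phi k (c + t * d)) t := by
    intro t ht
    have haff : HasDerivAt (fun t : ℝ => c + t * d) d t := by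
      simpa using (hasDerivAt_mul_const (x := t) d).const_add c
    have := ((hasDerivAt_phi k (hpos t ht)).comp t haff).mul_const d⁻¹
    rw [mul_assoc, mul_inv_cancel₀ hd, mul_one] at this
    exact this
  have hint : IntervalIntegrable (fun t => phi k (c + t * d)) volume 0 L := by
    apply Continuous.intervalIntegrable
    exact (continuous_phi k).comp (by fun_prop)
  have := intervalIntegral.integral_eq_sub_of_hasDerivAt hderiv hint
  rw [this]
  ring

section dd
variable {ι : Type*} [DecidableEq ι]

noncomputable def dd (f : ℝ → ℝ) (s : Finset ι) (v : ι → ℝ) : ℝ :=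
  ∑ i ∈ s, f (v i) / ∏ j ∈ s.erase i, (v i - v j)

lemma dd_map {κ : Type*} [DecidableEq κ] (f : ℝ → ℝ) (e : ι ↪ κ) (s : Finset ι) (v : κ → ℝ) :
    dd f (s.map e) v = dd f s (v ∘ e) := by
  unfold dd
  rw [Finset.sum_map]
  refine Finset.sum_congr rfl fun i hi => ?_
  congr 1
  rw [← Finset.map_erase, Finset.prod_map]
  rfl

lemma dd_insert_insert (f : ℝ → ℝ) (s : Finset ι) (v : ι → ℝ) (a c : ι)
    (ha : a ∉ s) (hc : c ∉ s) (hac : a ≠ c)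
    (hv : Set.InjOn v (insert a (insert c s) : Finset ι)) :
    dd f (insert a (insert c s)) v
      = (dd f (insert a s) v - dd f (insert c s) v) / (v a - v c) := by
  have hmem : ∀ i : ι, i ∈ s → (i : ι) ∈ (insert a (insert c s) : Finset ι) := by
    intro i hi; simp [hi]
  have hamem : a ∈ (insert a (insert c s) : Finset ι) := by simp
  have hcmem : c ∈ (insert a (insert c s) : Finset ι) := by simp
  have hvac : v a - v c ≠ 0 := by
    refine sub_ne_zero.mpr fun h => hac (hv ?_ ?_ h) <;> simp
  have hvca : v c - v a ≠ 0 := by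
    refine sub_ne_zero.mpr fun h => hac.symm (hv ?_ ?_ h) <;> simp
  have hvia : ∀ i ∈ s, v i - v a ≠ 0 := by
    intro i hi
    exact sub_ne_zero.mpr fun h => (fun hh : i = a => ha (hh ▸ hi)) (hv (hmem i hi) hamem h)
  have hvic : ∀ i ∈ s, v i - v c ≠ 0 := by
    intro i hi
    exact sub_ne_zero.mpr fun h => (fun hh : i = c => hc (hh ▸ hi)) (hv (hmem i hi) hcmem h)
  have hP : ∀ i ∈ s, ∏ j ∈ s.erase i, (v i - v j) ≠ 0 := by
    intro i hi
    refine Finset.prod_ne_zero_iff.mpr fun j hj => sub_ne_zero.mpr fun h => ?_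
    have hji := (Finset.mem_erase.mp hj).1
    exact hji.symm (hv (hmem i hi) (hmem j (Finset.mem_erase.mp hj).2) h)
  have hanotins : a ∉ insert c s := by simp [hac, ha]
  have hcnotins : c ∉ insert a s := by simp [Ne.symm hac, hc]
  have hai : ∀ i ∈ s, a ≠ i := fun i hi h => ha (h ▸ hi)
  have hci : ∀ i ∈ s, c ≠ i := fun i hi h => hc (h ▸ hi)
  have hbigc : (insert a (insert c s)).erase c = insert a s := by
    rw [Finset.erase_insert_of_ne hac, Finset.erase_insert hc]
  have EBIG : dd f (insert a (insert c s)) v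
      = f (v a) / ((v a - v c) * ∏ j ∈ s, (v a - v j))
        + (f (v c) / ((v c - v a) * ∏ j ∈ s, (v c - v j))
        + ∑ i ∈ s, f (v i) / ((v i - v a) * ((v i - v c) * ∏ j ∈ s.erase i, (v i - v j)))) := by
    unfold dd
    rw [Finset.sum_insert hanotins, Finset.sum_insert hc]
    congr 1
    · rw [Finset.erase_insert hanotins, Finset.prod_insert hc]
    congr 1
    · rw [hbigc, Finset.prod_insert ha]
    refine Finset.sum_congr rfl fun i hi => ?_
    rw [Finset.erase_insert_of_ne (hai i hi), Finset.erase_insert_of_ne (hci i hi)]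
    rw [Finset.prod_insert (by
        simp only [Finset.mem_insert, Finset.mem_erase, not_or]
        exact ⟨hac, fun h => ha h.2⟩),
      Finset.prod_insert (by
        simp only [Finset.mem_erase, not_and]
        exact fun _ => hc)]
  have EA : dd f (insert a s) v
      = f (v a) / ∏ j ∈ s, (v a - v j)
        + ∑ i ∈ s, f (v i) / ((v i - v a) * ∏ j ∈ s.erase i, (v i - v j)) := by
    unfold dd
    rw [Finset.sum_insert ha, Finset.erase_insert ha]
    congr 1
    refine Finset.sum_congr rfl fun i hi => ?_
    rw [Finset.erase_insert_of_ne (hai i hi),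
      Finset.prod_insert (by simp only [Finset.mem_erase, not_and]; exact fun _ => ha)]
  have EC : dd f (insert c s) v
      = f (v c) / ∏ j ∈ s, (v c - v j)
        + ∑ i ∈ s, f (v i) / ((v i - v c) * ∏ j ∈ s.erase i, (v i - v j)) := by
    unfold dd
    rw [Finset.sum_insert hc, Finset.erase_insert hc]
    congr 1
    refine Finset.sum_congr rfl fun i hi => ?_
    rw [Finset.erase_insert_of_ne (hci i hi),
      Finset.prod_insert (by simp only [Finset.mem_erase, not_and]; exact fun _ => hc)]
  rw [EBIG, EA, EC, eq_div_iff hvac, add_mul, add_mul, Finset.sum_mul]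
  have hterm : ∑ i ∈ s,
      f (v i) / ((v i - v a) * ((v i - v c) * ∏ j ∈ s.erase i, (v i - v j))) * (v a - v c)
      = ∑ i ∈ s, (f (v i) / ((v i - v a) * ∏ j ∈ s.erase i, (v i - v j))
        - f (v i) / ((v i - v c) * ∏ j ∈ s.erase i, (v i - v j))) := by
    refine Finset.sum_congr rfl fun i hi => ?_
    have h1 := hvia i hi; have h2 := hvic i hi; have h3 := hP i hi
    field_simp
    ring
  rw [hterm, Finset.sum_sub_distrib]
  have hPa : ∏ j ∈ s, (v a - v j) ≠ 0 := by
    refine Finset.prod_ne_zero_iff.mpr fun j hj => sub_ne_zero.mpr fun h => ?_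
    exact (hai j hj) (hv hamem (hmem j hj) h)
  have hPc : ∏ j ∈ s, (v c - v j) ≠ 0 := by
    refine Finset.prod_ne_zero_iff.mpr fun j hj => sub_ne_zero.mpr fun h => ?_
    exact (hci j hj) (hv hcmem (hmem j hj) h)
  have hba : f (v a) / ((v a - v c) * ∏ j ∈ s, (v a - v j)) * (v a - v c)
      = f (v a) / ∏ j ∈ s, (v a - v j) := by
    field_simp
  have hbc : f (v c) / ((v c - v a) * ∏ j ∈ s, (v c - v j)) * (v a - v c)
      = - (f (v c) / ∏ j ∈ s, (v c - v j)) := by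
    field_simp
    ring
  rw [hba, hbc]
  ring
end dd

open Polynomial in
lemma sum_pow_div_prod (n : ℕ) (v : Fin (n+1) → ℝ) (hv : Function.Injective v) :
    ∑ i, (v i)^(n+1) / ∏ j ∈ Finset.univ.erase i, (v i - v j) = ∑ i, v i := by
  classical
  have hvs : Set.InjOn v (Finset.univ : Finset (Fin (n+1))) := Function.Injective.injOn hv
  have hcard : (Finset.univ : Finset (Fin (n+1))).card = n + 1 := by simp
  set Q : ℝ[X] := ∏ i, (X - C (v i)) with hQ
  have hQm : Q.Monic := monic_prod_of_monic _ _ (fun i _ => monic_X_sub_C _)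
  have hQdeg : Q.natDegree = n + 1 := by
    rw [hQ, natDegree_prod_of_monic _ _ (fun i _ => monic_X_sub_C _)]
    simp
  set P : ℝ[X] := X ^ (n+1) - Q with hP
  have hdeg : P.degree < ((Finset.univ : Finset (Fin (n+1))).card : ℕ) := by
    rw [hcard]
    have h1 : (X ^ (n+1) : ℝ[X]).degree = ((n+1 : ℕ) : WithBot ℕ) := degree_X_pow _
    have h2 : Q.degree = ((n+1 : ℕ) : WithBot ℕ) := by
      rw [degree_eq_natDegree hQm.ne_zero, hQdeg]
    have := degree_sub_lt (h1.trans h2.symm) (by exact pow_ne_zero _ X_ne_zero)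
      (by rw [leadingCoeff_X_pow, hQm.leadingCoeff])
    rw [h1] at this
    exact_mod_cast this
  have hPeval : ∀ i ∈ (Finset.univ : Finset (Fin (n+1))), P.eval (v i) = (v i)^(n+1) := by
    intro i _
    rw [hP]
    simp only [eval_sub, eval_pow, eval_X, hQ, eval_prod, eval_sub, eval_X, eval_C]
    rw [Finset.prod_eq_zero (Finset.mem_univ i) (by simp)]
    ring
  have hinterp : P = Lagrange.interpolate Finset.univ v (fun i => (v i)^(n+1)) :=
    Lagrange.eq_interpolate_of_eval_eq _ hvs hdeg hPeval
  -- coefficient n of P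
  have hcoeffP : P.coeff n = ∑ i, v i := by
    rw [hP, coeff_sub, coeff_X_pow]
    have : Q.coeff n = -∑ i, v i := by
      have := prod_X_sub_C_coeff_card_pred (Finset.univ : Finset (Fin (n+1))) v (by simp)
      rw [hcard] at this
      simpa using this
    simp [this]
  -- coefficient n of interpolation
  have hcoeffI : (Lagrange.interpolate Finset.univ v (fun i => (v i)^(n+1))).coeff n
      = ∑ i, (v i)^(n+1) / ∏ j ∈ Finset.univ.erase i, (v i - v j) := by
    rw [Lagrange.interpolate_apply, finset_sum_coeff]
    refine Finset.sum_congr rfl fun i _ => ?_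
    rw [coeff_C_mul]
    have hbne : ∀ j ∈ Finset.univ.erase i, v i - v j ≠ 0 := by
      intro j hj
      exact sub_ne_zero.mpr fun h => (Finset.mem_erase.mp hj).1 (hv h.symm)
    have hb : (Lagrange.basis Finset.univ v i).coeff n
        = (∏ j ∈ Finset.univ.erase i, (v i - v j))⁻¹ := by
      have hnd : (Lagrange.basis Finset.univ v i).natDegree = n :=
        by rw [Lagrange.natDegree_basis hvs (Finset.mem_univ i), hcard]; omega
      have : (Lagrange.basis Finset.univ v i).coeff n
          = (Lagrange.basis Finset.univ v i).leadingCoeff := by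
        rw [Polynomial.leadingCoeff, hnd]
      rw [this]
      unfold Lagrange.basis
      rw [leadingCoeff_prod]
      rw [← Finset.prod_inv_distrib]
      refine Finset.prod_congr rfl fun j hj => ?_
      unfold Lagrange.basisDivisor
      rw [leadingCoeff_mul, leadingCoeff_C, (monic_X_sub_C (v j)).leadingCoeff]
      ring
    rw [hb, div_eq_mul_inv]
  rw [← hcoeffP, hinterp, hcoeffI]

/-! ### The solid simplex -/

def sS (n : ℕ) : Set (Fin n → ℝ) := {x | (∀ j, 0 ≤ x j) ∧ ∑ j, x j ≤ 1}

lemma isClosed_sS (n : ℕ) : IsClosed (sS n) := by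
  have : sS n = (⋂ j, {x : Fin n → ℝ | 0 ≤ x j}) ∩ {x : Fin n → ℝ | ∑ j, x j ≤ 1} := by
    ext x; simp [sS, Set.mem_iInter]
  rw [this]
  exact (isClosed_iInter fun j => isClosed_le continuous_const (continuous_apply j)).inter
    (isClosed_le (by fun_prop) continuous_const)

lemma measurableSet_sS (n : ℕ) : MeasurableSet (sS n) := (isClosed_sS n).measurableSet

lemma isCompact_sS (n : ℕ) : IsCompact (sS n) := by
  refine IsCompact.of_isClosed_subset (isCompact_univ_pi fun _ => isCompact_Icc (a := (0:ℝ)) (b := 1))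
    (isClosed_sS n) ?_
  intro x hx
  refine Set.mem_univ_pi.mpr fun i => ⟨hx.1 i, ?_⟩
  calc x i ≤ ∑ j, x j := Finset.single_le_sum (fun j _ => hx.1 j) (Finset.mem_univ i)
  _ ≤ 1 := hx.2

lemma integrableOn_sS {n : ℕ} {F : (Fin n → ℝ) → ℝ} (hF : Continuous F) :
    IntegrableOn F (sS n) volume :=
  hF.continuousOn.integrableOn_compact (isCompact_sS n)

lemma sum_snoc_eq {n : ℕ} (y : Fin n → ℝ) (t : ℝ) :
    ∑ j, Fin.snoc y t j = (∑ j, y j) + t := by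
  rw [Fin.sum_univ_castSucc]
  simp

lemma snoc_mem_sS_iff {n : ℕ} {y : Fin n → ℝ} {t : ℝ} (hy : y ∈ sS n) :
    Fin.snoc y t ∈ sS (n+1) ↔ t ∈ Set.Icc 0 (1 - ∑ j, y j) := by
  constructor
  · rintro ⟨h1, h2⟩
    rw [sum_snoc_eq] at h2
    have := h1 (Fin.last n)
    rw [Fin.snoc_last] at this
    exact ⟨this, by linarith⟩
  · rintro ⟨h1, h2⟩
    constructor
    · intro j
      refine Fin.lastCases ?_ ?_ j
      · rw [Fin.snoc_last]; exact h1
      · intro i; rw [Fin.snoc_castSucc]; exact hy.1 i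
    · rw [sum_snoc_eq]; linarith

lemma snoc_not_mem_sS {n : ℕ} {y : Fin n → ℝ} (hy : y ∉ sS n) (t : ℝ) :
    Fin.snoc y t ∉ sS (n+1) := by
  rintro ⟨h1, h2⟩
  refine hy ⟨fun j => ?_, ?_⟩
  · have := h1 (Fin.castSucc j); rwa [Fin.snoc_castSucc] at this
  · have ht := h1 (Fin.last n)
    rw [Fin.snoc_last] at ht
    rw [sum_snoc_eq] at h2
    linarith

/-- Peeling the last coordinate of an integral over the solid simplex. -/
lemma peel (n : ℕ) (F : (Fin (n+1) → ℝ) → ℝ) (hF : Continuous F) :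
    ∫ x in sS (n+1), F x
      = ∫ y in sS n, ∫ t in (0:ℝ)..(1 - ∑ j, y j), F (Fin.snoc y t) := by
  classical
  set e := MeasurableEquiv.piFinSuccAbove (fun _ : Fin (n+1) => ℝ) (Fin.last n) with he
  have hmp : MeasurePreserving e volume volume :=
    volume_preserving_piFinSuccAbove (fun _ : Fin (n+1) => ℝ) (Fin.last n)
  set G : (Fin (n+1) → ℝ) → ℝ := Set.indicator (sS (n+1)) F with hG
  have hGint : Integrable G volume := by
    rw [hG, integrable_indicator_iff (measurableSet_sS _)]
    exact integrableOn_sS hF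
  have h1 : ∫ x in sS (n+1), F x = ∫ x, G x := (integral_indicator (measurableSet_sS _)).symm
  have h2 : ∫ x, G x = ∫ z : ℝ × (Fin n → ℝ), G (e.symm z) :=
    (hmp.symm e |>.integral_comp (MeasurableEquiv.measurableEmbedding _) G).symm
  have hGint2 : Integrable (fun z : ℝ × (Fin n → ℝ) => G (e.symm z)) volume := by
    exact ((hmp.symm e).integrable_comp_emb (MeasurableEquiv.measurableEmbedding _)).mpr hGint
  have hsymm : ∀ (t : ℝ) (y : Fin n → ℝ), e.symm (t, y) = Fin.snoc y t := by
    intro t y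
    rw [he]
    rw [MeasurableEquiv.piFinSuccAbove_symm_apply]
    exact Fin.insertNth_last' t y
  rw [h1, h2]
  rw [Measure.volume_eq_prod] at hGint2 ⊢
  rw [MeasureTheory.integral_prod _ hGint2]
  rw [MeasureTheory.integral_integral_swap (by exact hGint2)]
  have key : ∀ y : Fin n → ℝ, (∫ t, G (e.symm (t, y)))
      = Set.indicator (sS n) (fun y => ∫ t in (0:ℝ)..(1 - ∑ j, y j), F (Fin.snoc y t)) y := by
    intro y
    by_cases hy : y ∈ sS n
    · rw [Set.indicator_of_mem hy]
      have hfun : (fun t => G (e.symm (t, y)))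
          = Set.indicator (Set.Icc 0 (1 - ∑ j, y j)) (fun t => F (Fin.snoc y t)) := by
        funext t
        rw [hsymm, hG]
        by_cases ht : t ∈ Set.Icc 0 (1 - ∑ j, y j)
        · rw [Set.indicator_of_mem ht, Set.indicator_of_mem ((snoc_mem_sS_iff hy).mpr ht)]
        · rw [Set.indicator_of_notMem ht,
            Set.indicator_of_notMem (fun hmem => ht ((snoc_mem_sS_iff hy).mp hmem))]
      rw [hfun, integral_indicator measurableSet_Icc]
      have hL : (0:ℝ) ≤ 1 - ∑ j, y j := by
        have := hy.2; linarith
      rw [MeasureTheory.integral_Icc_eq_integral_Ioc, ← intervalIntegral.integral_of_le hL]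
    · rw [Set.indicator_of_notMem hy]
      have hfun : (fun t => G (e.symm (t, y))) = fun _ => (0:ℝ) := by
        funext t
        rw [hsymm, hG, Set.indicator_of_notMem (snoc_not_mem_sS hy t)]
      rw [hfun]
      simp
  rw [show (fun y : Fin n → ℝ => ∫ t, G (e.symm (t, y)))
      = Set.indicator (sS n) (fun y => ∫ t in (0:ℝ)..(1 - ∑ j, y j), F (Fin.snoc y t))
      from funext key]
  exact integral_indicator (measurableSet_sS n)

lemma integral_sS_zero (F : (Fin 0 → ℝ) → ℝ) : ∫ x in sS 0, F x = F (fun i => i.elim0) := by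
  have h1 : sS 0 = Set.univ := by
    ext x; simp [sS]
  rw [h1, Measure.restrict_univ]
  have h2 : F = fun _ => F (fun i => i.elim0) := funext fun x => congrArg F (Subsingleton.elim _ _)
  rw [h2, integral_const]
  have h3 : (volume : Measure (Fin 0 → ℝ)).real Set.univ = 1 := by
    rw [MeasureTheory.measureReal_def, MeasureTheory.volume_pi, MeasureTheory.Measure.pi_univ]
    simp
  rw [h3]
  simp

lemma swap_coord {n : ℕ} (j j' : Fin n) (G : ℝ → ℝ) (hG : Continuous G) :
    ∫ x in sS n, G (x j) = ∫ x in sS n, G (x j') := by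
  classical
  set e := Equiv.swap j j' with he
  set T := (MeasurableEquiv.piCongrLeft (fun _ : Fin n => ℝ) e).symm with hT
  have hTapp : ∀ (x : Fin n → ℝ) (a : Fin n), T x a = x (e a) := by
    intro x a
    rw [hT]
    exact Equiv.piCongrLeft_symm_apply _ e x a
  have hmp : MeasurePreserving T volume volume :=
    (volume_measurePreserving_piCongrLeft (fun _ : Fin n => ℝ) e).symm
  have hpre : T ⁻¹' (sS n) = sS n := by
    ext x
    simp only [Set.mem_preimage]
    constructor
    · rintro ⟨h1, h2⟩
      refine ⟨fun a => ?_, ?_⟩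
      · have := h1 (e.symm a); rwa [hTapp, Equiv.apply_symm_apply] at this
      · rw [show (∑ a, x a) = ∑ a, T x a from
          (Fintype.sum_equiv e (fun a => T x a) x (fun a => hTapp x a)).symm]
        exact h2
    · rintro ⟨h1, h2⟩
      refine ⟨fun a => ?_, ?_⟩
      · rw [hTapp]; exact h1 _
      · rw [show (∑ a, T x a) = ∑ a, x a from
          Fintype.sum_equiv e (fun a => T x a) x (fun a => hTapp x a)]
        exact h2
  have := hmp.setIntegral_preimage_emb (MeasurableEquiv.measurableEmbedding _)
    (fun y => G (y j)) (sS n)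
  rw [hpre] at this
  rw [← this]
  refine setIntegral_congr_fun (measurableSet_sS n) fun x _ => ?_
  rw [hTapp]
  congr 1
  rw [he, Equiv.swap_apply_left]

lemma K_lemma (n k : ℕ) : (∫ x in sS n, phi k (1 - ∑ j, x j)) = phi (k+n) 1 := by
  induction n generalizing k with
  | zero =>
    rw [integral_sS_zero (fun x : Fin 0 → ℝ => phi k (1 - ∑ j, x j))]
    simp
  | succ n ih =>
    rw [peel n (fun x => phi k (1 - ∑ j, x j)) (by
      exact (continuous_phi k).comp (by fun_prop))]
    have hcong : ∀ y ∈ sS n, (∫ t in (0:ℝ)..(1 - ∑ j, y j), phi k (1 - ∑ j, Fin.snoc y t j))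
        = phi (k+1) (1 - ∑ j, y j) := by
      intro y hy
      have hL : (0:ℝ) ≤ 1 - ∑ j, y j := by have := hy.2; linarith
      have h1 : ∀ t : ℝ, (1 - ∑ j, Fin.snoc y t j) = (1 - ∑ j, y j) + t * (-1) := by
        intro t; rw [sum_snoc_eq]; ring
      rw [intervalIntegral.integral_congr (g := fun t => phi k ((1 - ∑ j, y j) + t * (-1)))
        (fun t _ => by rw [h1])]
      rw [integral_phi_affine hL (by norm_num) (by
        intro t ht
        rw [Set.uIcc_of_le hL] at ht
        have h1 := ht.1; have h2 := ht.2
        linarith)]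
      have hz : (1 - ∑ j, y j) + (1 - ∑ j, y j) * (-1) = 0 := by ring
      rw [hz, phi_at_zero]
      ring
    rw [setIntegral_congr_fun (measurableSet_sS n) hcong]
    rw [ih (k+1)]
    congr 1
    omega

lemma coord_last (n k : ℕ) :
    (∫ x in sS (n+1), phi k (x (Fin.last n))) = phi (k+n+1) 1 := by
  rw [peel n (fun x => phi k (x (Fin.last n))) ((continuous_phi k).comp (continuous_apply _))]
  have hcong : ∀ y ∈ sS n, (∫ t in (0:ℝ)..(1 - ∑ j, y j), phi k (Fin.snoc (α := fun _ => ℝ) y t (Fin.last n)))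
      = phi (k+1) (1 - ∑ j, y j) := by
    intro y hy
    have hL : (0:ℝ) ≤ 1 - ∑ j, y j := by have := hy.2; linarith
    rw [intervalIntegral.integral_congr (g := fun t => phi k ((0:ℝ) + t * 1))
      (fun t _ => by rw [Fin.snoc_last]; norm_num)]
    rw [integral_phi_affine hL (by norm_num) (by
      intro t ht
      rw [Set.uIcc_of_le hL] at ht
      have := ht.1; linarith)]
    rw [phi_at_zero]
    ring_nf
  rw [setIntegral_congr_fun (measurableSet_sS n) hcong, K_lemma n (k+1)]
  congr 1
  omega

/-! ### The affine map and the Hermite–Genocchi style induction -/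

noncomputable def aff {n : ℕ} (b : Fin (n+1) → ℝ) (x : Fin n → ℝ) : ℝ :=
  (∑ j, x j * b j.castSucc) + (1 - ∑ j, x j) * b (Fin.last n)

lemma continuous_aff {n : ℕ} (b : Fin (n+1) → ℝ) : Continuous (aff b) := by
  unfold aff
  fun_prop

lemma aff_nonneg {n : ℕ} {b : Fin (n+1) → ℝ} (hb : ∀ i, 0 ≤ b i) {x : Fin n → ℝ}
    (hx : x ∈ sS n) : 0 ≤ aff b x := by
  refine add_nonneg (Finset.sum_nonneg fun j _ => mul_nonneg (hx.1 j) (hb _)) ?_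
  exact mul_nonneg (by have := hx.2; linarith) (hb _)

def eL (n : ℕ) : Fin (n+1) → Fin (n+2) :=
  Fin.snoc (fun j : Fin n => j.castSucc.castSucc) (Fin.last (n+1))

lemma eL_castSucc {n : ℕ} (j : Fin n) : eL n j.castSucc = j.castSucc.castSucc := by
  unfold eL; rw [Fin.snoc_castSucc]

lemma eL_last {n : ℕ} : eL n (Fin.last n) = Fin.last (n+1) := by
  unfold eL; rw [Fin.snoc_last]

lemma eL_val {n : ℕ} (i : Fin (n+1)) : (eL n i).val = if i.val < n then i.val else n + 1 := by
  refine Fin.lastCases ?_ ?_ i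
  · rw [eL_last]; simp
  · intro j; rw [eL_castSucc]; simp [j.isLt]

lemma eL_injective {n : ℕ} : Function.Injective (eL n) := by
  intro i j h
  have := congrArg Fin.val h
  rw [eL_val, eL_val] at this
  have hi := i.isLt; have hj := j.isLt
  ext
  split_ifs at this <;> omega

lemma aff_snoc {n : ℕ} (b : Fin (n+2) → ℝ) (y : Fin n → ℝ) (t : ℝ) :
    aff b (Fin.snoc y t) = aff (b ∘ eL n) y
      + t * (b ((Fin.last n).castSucc) - b (Fin.last (n+1))) := by
  have hsum : ∑ j : Fin (n+1), Fin.snoc (α := fun _ => ℝ) y t j * b j.castSucc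
      = (∑ j : Fin n, y j * b j.castSucc.castSucc) + t * b ((Fin.last n).castSucc) := by
    rw [Fin.sum_univ_castSucc]
    simp
  unfold aff
  rw [hsum, sum_snoc_eq]
  simp only [Function.comp_apply, eL_castSucc, eL_last]
  ring

lemma aff_top {n : ℕ} (b : Fin (n+2) → ℝ) (y : Fin n → ℝ) :
    aff (b ∘ Fin.castSucc) y = aff (b ∘ eL n) y
      + (1 - ∑ j, y j) * (b ((Fin.last n).castSucc) - b (Fin.last (n+1))) := by
  unfold aff
  simp only [Function.comp_apply, eL_castSucc, eL_last]
  ring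

lemma univ_fin_succ_eq (m : ℕ) :
    (Finset.univ : Finset (Fin (m+1))) = insert (Fin.last m) (Finset.univ.map Fin.castSuccEmb) := by
  ext i
  simp only [Finset.mem_univ, true_iff, Finset.mem_insert, Finset.mem_map]
  rcases Fin.eq_castSucc_or_eq_last i with ⟨j, rfl⟩ | rfl
  · exact Or.inr ⟨j, trivial, rfl⟩
  · exact Or.inl rfl

lemma dd_univ_succ (f : ℝ → ℝ) (n : ℕ) (b : Fin (n+2) → ℝ) (hb : Function.Injective b) :
    dd f Finset.univ b
      = (dd f Finset.univ (b ∘ Fin.castSucc) - dd f Finset.univ (b ∘ eL n))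
        / (b ((Fin.last n).castSucc) - b (Fin.last (n+1))) := by
  classical
  set a : Fin (n+2) := (Fin.last n).castSucc with hadef
  set c : Fin (n+2) := Fin.last (n+1) with hcdef
  set s₀ : Finset (Fin (n+2)) :=
    Finset.univ.map (Fin.castSuccEmb.trans Fin.castSuccEmb) with hs0
  have hmap1 : (Finset.univ : Finset (Fin (n+1))).map Fin.castSuccEmb = insert a s₀ := by
    rw [univ_fin_succ_eq n, Finset.map_insert, Finset.map_map]
    rfl
  have hU : (Finset.univ : Finset (Fin (n+2))) = insert a (insert c s₀) := by
    rw [univ_fin_succ_eq (n+1), hmap1, Finset.insert_comm]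
  have has0 : a ∉ s₀ := by
    rw [hs0]
    simp only [Finset.mem_map, Finset.mem_univ, true_and, not_exists]
    intro j h
    have := congrArg Fin.val h
    simp [hadef] at this
    omega
  have hcs0 : c ∉ s₀ := by
    rw [hs0]
    simp only [Finset.mem_map, Finset.mem_univ, true_and, not_exists]
    intro j h
    have := congrArg Fin.val h
    simp [hcdef] at this
    omega
  have hac : a ≠ c := by
    intro h
    have := congrArg Fin.val h
    simp [hadef, hcdef] at this
  have hEmb : Function.Embedding.trans Fin.castSuccEmb Fin.castSuccEmb
      = Function.Embedding.trans Fin.castSuccEmb ⟨eL n, eL_injective⟩ := by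
    ext j
    simp only [Function.Embedding.trans_apply, Fin.coe_castSuccEmb,
      Function.Embedding.coeFn_mk]
    rw [eL_castSucc]
  have hmap2 : (Finset.univ : Finset (Fin (n+1))).map ⟨eL n, eL_injective⟩ = insert c s₀ := by
    rw [univ_fin_succ_eq n, Finset.map_insert, Finset.map_map, ← hEmb, ← hs0]
    congr 1
    exact eL_last
  have step := dd_insert_insert f s₀ b a c has0 hcs0 hac (by
    rw [← hU, Finset.coe_univ]
    exact hb.injOn)
  rw [hU, step, ← hmap1, ← hmap2, dd_map, dd_map]
  rfl

lemma J_eq (n : ℕ) : ∀ (k : ℕ) (b : Fin (n+1) → ℝ), (∀ i, 0 ≤ b i) → Function.Injective b →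
    (∫ x in sS n, phi k (aff b x)) = dd (phi (k+n)) Finset.univ b := by
  induction n with
  | zero =>
    intro k b hb hinj
    rw [integral_sS_zero (fun x : Fin 0 → ℝ => phi k (aff b x))]
    unfold dd aff
    simp
  | succ n ih =>
    intro k b hb hinj
    set d : ℝ := b ((Fin.last n).castSucc) - b (Fin.last (n+1)) with hd
    have hdne : d ≠ 0 := by
      rw [hd]
      refine sub_ne_zero.mpr fun h => ?_
      have := hinj h
      have := congrArg Fin.val this
      simp at this
    rw [peel n (fun x => phi k (aff b x)) ((continuous_phi k).comp (continuous_aff b))]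
    have hcong : ∀ y ∈ sS n, (∫ t in (0:ℝ)..(1 - ∑ j, y j), phi k (aff b (Fin.snoc y t)))
        = (phi (k+1) (aff (b ∘ Fin.castSucc) y) - phi (k+1) (aff (b ∘ eL n) y)) * d⁻¹ := by
      intro y hy
      have hL : (0:ℝ) ≤ 1 - ∑ j, y j := by have := hy.2; linarith
      rw [intervalIntegral.integral_congr
        (g := fun t => phi k (aff (b ∘ eL n) y + t * d)) (fun t _ => by rw [aff_snoc, hd])]
      rw [integral_phi_affine hL hdne (by
        intro t ht
        rw [Set.uIcc_of_le hL] at ht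
        rw [hd, ← aff_snoc]
        exact aff_nonneg hb ((snoc_mem_sS_iff hy).mpr ht))]
      congr 2
      rw [aff_top, hd]
    rw [setIntegral_congr_fun (measurableSet_sS n) hcong]
    rw [MeasureTheory.integral_mul_const]
    have hint1 : IntegrableOn (fun y : Fin n → ℝ => phi (k+1) (aff (b ∘ Fin.castSucc) y))
        (sS n) volume := integrableOn_sS ((continuous_phi (k+1)).comp (continuous_aff _))
    have hint2 : IntegrableOn (fun y : Fin n → ℝ => phi (k+1) (aff (b ∘ eL n) y))
        (sS n) volume := integrableOn_sS ((continuous_phi (k+1)).comp (continuous_aff _))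
    rw [MeasureTheory.integral_sub hint1 hint2]
    rw [ih (k+1) (b ∘ Fin.castSucc) (fun i => hb _) (hinj.comp (Fin.castSucc_injective _)),
      ih (k+1) (b ∘ eL n) (fun i => hb _) (hinj.comp eL_injective)]
    rw [dd_univ_succ (phi (k + (n+1))) n b hinj]
    rw [show k + 1 + n = k + (n + 1) by omega]
    rw [div_eq_mul_inv, hd]

/-! ### remaining coordinate integrals -/

lemma coord_any {n : ℕ} (j : Fin (n+1)) :
    ∫ x in sS (n+1), Real.negMulLog (x j) = phi (n+1) 1 := by
  rw [← phi_zero_eq]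
  rw [swap_coord j (Fin.last n) (phi 0) (continuous_phi 0)]
  have := coord_last n 0
  simpa using this

lemma coord_any' {n : ℕ} (j : Fin n) :
    ∫ x in sS n, Real.negMulLog (x j) = phi n 1 := by
  cases n with
  | zero => exact j.elim0
  | succ m => exact coord_any j

lemma K0 (n : ℕ) : ∫ x in sS n, Real.negMulLog (1 - ∑ j, x j) = phi n 1 := by
  rw [← phi_zero_eq]
  have := K_lemma n 0
  simpa using this

/-! ### subentropy and dd -/

lemma dd_phi {n : ℕ} (b : Fin (n+1) → ℝ) (hinj : Function.Injective b)
    (hsum : ∑ i, b i = 1) :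
    dd (phi n) Finset.univ b
      = (subentropy b + (harmonicNum (n+1) - 1)) / (n+1).factorial := by
  unfold dd subentropy
  have h1 : ∀ i : Fin (n+1), phi n (b i) / ∏ j ∈ Finset.univ.erase i, (b i - b j)
      = (-(b i ^ (n+1) * Real.log (b i) / ∏ j ∈ Finset.univ.erase i, (b i - b j))
        + (harmonicNum (n+1) - 1) * (b i ^ (n+1) / ∏ j ∈ Finset.univ.erase i, (b i - b j)))
        / (n+1).factorial := by
    intro i
    unfold phi Real.negMulLog
    ring
  have h2 : ∑ i, phi n (b i) / ∏ j ∈ Finset.univ.erase i, (b i - b j)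
      = ∑ i, (-(b i ^ (n+1) * Real.log (b i) / ∏ j ∈ Finset.univ.erase i, (b i - b j))
        + (harmonicNum (n+1) - 1) * (b i ^ (n+1) / ∏ j ∈ Finset.univ.erase i, (b i - b j)))
        / (n+1).factorial := Finset.sum_congr rfl fun i _ => h1 i
  rw [h2, ← Finset.sum_div, Finset.sum_add_distrib, ← Finset.mul_sum,
    sum_pow_div_prod n b hinj, hsum, mul_one]
  congr 1
  rw [← Finset.sum_neg_distrib]

/-- Theorem 1: the coherence generating power of a unitary channel `Ad_U`
equals the average subentropy of the rows of `B(U)`, `B(U)_{ij} = |u_{ij}|²`. -/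
theorem cgp_unitary (N : ℕ) (hN : 1 ≤ N) (U : Matrix (Fin N) (Fin N) ℂ)
    (hU : U ∈ Matrix.unitaryGroup (Fin N) ℂ)
    (BU : Matrix (Fin N) (Fin N) ℝ)
    (hBU : ∀ i j, BU i j = ‖U i j‖ ^ 2)
    (hrows : ∀ i : Fin N, ∀ j k : Fin N, j ≠ k → BU i j ≠ BU i k) :
    simplexIntegral N (fun lam => shannonEntropy (BU.mulVec lam) - shannonEntropy lam) =
      (1 / N) * ∑ i, subentropy (fun j => BU i j) := by
  classical
  obtain ⟨n, rfl⟩ : ∃ n, N = n + 1 := ⟨N - 1, by omega⟩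
  have hnn : ∀ i j, 0 ≤ BU i j := fun i j => by rw [hBU]; positivity
  have hinj : ∀ i, Function.Injective (fun j => BU i j) := by
    intro i j k h
    by_contra hne
    exact hrows i j k hne h
  have hsum : ∀ i, ∑ j, BU i j = 1 := by
    intro i
    have hUU : U * star U = 1 := Matrix.mem_unitaryGroup_iff.mp hU
    have h2 : (U * star U) i i = (1 : Matrix (Fin (n+1)) (Fin (n+1)) ℂ) i i := by rw [hUU]
    rw [Matrix.mul_apply, Matrix.one_apply_eq] at h2
    have h3 : ∑ j, ((BU i j : ℝ) : ℂ) = 1 := by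
      rw [← h2]
      refine Finset.sum_congr rfl fun j _ => ?_
      rw [hBU i j, Matrix.star_apply, Complex.star_def, Complex.mul_conj, ← Complex.sq_norm]
    exact_mod_cast h3
  have hmap : ∀ x : Fin n → ℝ, simplexMap (n+1) x = Fin.snoc x (1 - ∑ j, x j) := by
    intro x
    funext i
    refine Fin.lastCases ?_ ?_ i
    · rw [Fin.snoc_last]
      unfold simplexMap
      rw [dif_neg (by simp)]
      rfl
    · intro j
      rw [Fin.snoc_castSucc]
      unfold simplexMap
      rw [dif_pos (by simpa using j.isLt)]
      exact congrArg x (Fin.ext (by simp))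
  have hmv : ∀ (i : Fin (n+1)) (x : Fin n → ℝ),
      BU.mulVec (Fin.snoc x (1 - ∑ j, x j)) i = aff (fun j => BU i j) x := by
    intro i x
    have hdot : BU.mulVec (Fin.snoc x (1 - ∑ j, x j)) i
        = ∑ j : Fin (n+1), BU i j * Fin.snoc (α := fun _ => ℝ) x (1 - ∑ j, x j) j := by
      simp [Matrix.mulVec, dotProduct]
    rw [hdot, Fin.sum_univ_castSucc]
    simp only [Fin.snoc_castSucc, Fin.snoc_last]
    have hs : ∑ j : Fin n, BU i j.castSucc * x j = ∑ j : Fin n, x j * BU i j.castSucc :=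
      Finset.sum_congr rfl fun j _ => mul_comm _ _
    rw [hs]
    unfold aff
    ring
  have hfun : (fun x : Fin n → ℝ =>
        shannonEntropy (BU.mulVec (simplexMap (n+1) x)) - shannonEntropy (simplexMap (n+1) x))
      = fun x : Fin n → ℝ => (∑ i, phi 0 (aff (fun j => BU i j) x))
        - ((∑ j : Fin n, Real.negMulLog (x j)) + Real.negMulLog (1 - ∑ j, x j)) := by
    funext x
    rw [hmap]
    unfold shannonEntropy
    congr 1
    · refine Finset.sum_congr rfl fun i _ => ?_
      rw [phi_zero_eq, hmv]
    · rw [Fin.sum_univ_castSucc]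
      simp
  have hIA : ∀ i : Fin (n+1), IntegrableOn (fun x : Fin n → ℝ => phi 0 (aff (fun j => BU i j) x))
      (sS n) volume := fun i => integrableOn_sS ((continuous_phi 0).comp (continuous_aff _))
  have hIB1 : IntegrableOn (fun x : Fin n → ℝ => ∑ j : Fin n, Real.negMulLog (x j))
      (sS n) volume := integrableOn_sS
        (continuous_finset_sum _ fun j _ => Real.continuous_negMulLog.comp (continuous_apply j))
  have hIB2 : IntegrableOn (fun x : Fin n → ℝ => Real.negMulLog (1 - ∑ j, x j))
      (sS n) volume := integrableOn_sS (Real.continuous_negMulLog.comp (by fun_prop))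
  have hgoal : ((n.factorial : ℕ) : ℝ) * (∫ x in sS n,
        shannonEntropy (BU.mulVec (simplexMap (n+1) x)) - shannonEntropy (simplexMap (n+1) x))
      = 1 / (((n+1 : ℕ)) : ℝ) * ∑ i, subentropy fun j => BU i j := ?_
  case _ =>
    unfold simplexIntegral
    rw [show solidSimplex (n+1) = sS n from rfl]
    exact hgoal
  rw [hfun]
  have hIAsum : IntegrableOn (fun x : Fin n → ℝ => ∑ i : Fin (n+1), phi 0 (aff (fun j => BU i j) x))
      (sS n) volume := MeasureTheory.integrable_finset_sum _ fun i _ => hIA i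
  have hIB : IntegrableOn (fun x : Fin n → ℝ =>
      (∑ j : Fin n, Real.negMulLog (x j)) + Real.negMulLog (1 - ∑ j, x j)) (sS n) volume :=
    hIB1.add hIB2
  rw [MeasureTheory.integral_sub hIAsum hIB]
  rw [MeasureTheory.integral_finset_sum _ fun i _ => hIA i]
  rw [MeasureTheory.integral_add hIB1 hIB2]
  have hIBj : ∀ j : Fin n, IntegrableOn (fun x : Fin n → ℝ => Real.negMulLog (x j)) (sS n) volume :=
    fun j => integrableOn_sS (Real.continuous_negMulLog.comp (continuous_apply j))
  rw [MeasureTheory.integral_finset_sum _ fun j (_ : j ∈ Finset.univ) => hIBj j]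
  have hval1 : ∀ i : Fin (n+1), (∫ x in sS n, phi 0 (aff (fun j => BU i j) x))
      = (subentropy (fun j => BU i j) + (harmonicNum (n+1) - 1)) / ((n+1).factorial : ℝ) := by
    intro i
    have h := J_eq n 0 (fun j => BU i j) (fun j => hnn i j) (hinj i)
    rw [Nat.zero_add] at h
    rw [h]
    exact dd_phi _ (hinj i) (hsum i)
  have hS1 : (∑ i : Fin (n+1), ∫ x in sS n, phi 0 (aff (fun j => BU i j) x))
      = ∑ i : Fin (n+1),
        (subentropy (fun j => BU i j) + (harmonicNum (n+1) - 1)) / ((n+1).factorial : ℝ) :=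
    Finset.sum_congr rfl fun i _ => hval1 i
  have hS2 : (∑ j : Fin n, ∫ x in sS n, Real.negMulLog (x j)) = ∑ _j : Fin n, phi n 1 :=
    Finset.sum_congr rfl fun j _ => coord_any' j
  rw [hS1, hS2, K0 n]
  rw [Finset.sum_const, Finset.card_univ, Fintype.card_fin, nsmul_eq_mul]
  rw [← Finset.sum_div, Finset.sum_add_distrib, Finset.sum_const, Finset.card_univ,
    Fintype.card_fin, nsmul_eq_mul, phi_one]
  have hF : (((n+1).factorial : ℕ) : ℝ) = ((n:ℝ)+1) * ((n.factorial : ℕ) : ℝ) := by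
    rw [Nat.factorial_succ]
    push_cast
    ring
  rw [hF]
  have h1 : ((n.factorial : ℕ) : ℝ) ≠ 0 := by positivity
  have h2 : ((n:ℝ)+1) ≠ 0 := by positivity
  rw [show ((n+1 : ℕ) : ℝ) = (n : ℝ) + 1 by push_cast; ring]
  field_simp
  ring
end
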